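/- arXiv:1506.02878 — 7 statements merged into one kernel-verified Lean document; each statement's English description precedes it below -/
import Mathlib

section
/- Let C be a triangulated category, let t : id_C → id_C be a natural transformation of triangulated functors, let Σ = {t_X^n : X object of C, n ∈ ℕ}, and let p : C → C[t^{-1}] be the canonical functor to the Gabriel–Zisman localization of C at Σ. Then for any object X of C the following are equivalent: (i) p(X) ≅ 0 in C[t^{-1}]; (ii) there exists n ≥ 0 such that t_X^n = 0. -/
open CategoryTheory Limits Pretriangulated

universe v u

/-- The `n`-th power `t_X^n : X ⟶ X` of a natural transformation `t : 𝟭 C ⟶ 𝟭 C`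
evaluated at `X`. -/
def tpow {C : Type u} [Category.{v} C] (t : 𝟭 C ⟶ 𝟭 C) (X : C) : ℕ → (X ⟶ X)
  | 0 => 𝟙 X
  | (n + 1) => tpow t X n ≫ t.app X

/-- The class of morphisms `Σ = {t_X^n : X object of C, n ∈ ℕ}`. -/
def sigmaT {C : Type u} [Category.{v} C] (t : 𝟭 C ⟶ 𝟭 C) : MorphismProperty C :=
  fun X Y f => ∃ (n : ℕ) (e : X = Y), f = tpow t X n ≫ eqToHom e

lemma tpow_natural {C : Type u} [Category.{v} C] (t : 𝟭 C ⟶ 𝟭 C) {X Y : C}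
    (f : X ⟶ Y) (n : ℕ) : f ≫ tpow t Y n = tpow t X n ≫ f := by
  induction n with
  | zero => simp [tpow]
  | succ n ih =>
      have h := t.naturality f
      dsimp at h
      rw [tpow, tpow, ← Category.assoc, ih, Category.assoc, h, Category.assoc]

lemma tpow_add {C : Type u} [Category.{v} C] (t : 𝟭 C ⟶ 𝟭 C) (X : C) (m n : ℕ) :
    tpow t X m ≫ tpow t X n = tpow t X (m + n) := by
  induction n with
  | zero => simp [tpow]
  | succ n ih => rw [tpow, ← Category.assoc, ih, ← tpow]; rfl

instance sigmaT_mult {C : Type u} [Category.{v} C] (t : 𝟭 C ⟶ 𝟭 C) :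
    (sigmaT t).IsMultiplicative where
  id_mem X := ⟨0, rfl, by simp [tpow]⟩
  comp_mem := by
    rintro X Y Z f g ⟨m, rfl, rfl⟩ ⟨n, rfl, rfl⟩
    exact ⟨m + n, rfl, by simp [tpow_add]⟩

instance sigmaT_left_calc {C : Type u} [Category.{v} C] (t : 𝟭 C ⟶ 𝟭 C) :
    (sigmaT t).HasLeftCalculusOfFractions where
  exists_leftFraction := by
    rintro X Y φ
    obtain ⟨n, e, hs⟩ := φ.hs
    refine ⟨⟨eqToHom e.symm ≫ φ.f, tpow t Y n, ⟨n, rfl, by simp⟩⟩, ?_⟩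
    dsimp
    rw [tpow_natural, hs]
    simp
  ext := by
    rintro X' X Y f₁ f₂ s ⟨n, rfl, rfl⟩ h
    simp only [Category.comp_id, eqToHom_refl, Category.assoc] at h
    refine ⟨Y, tpow t Y n, ⟨n, rfl, by simp⟩, ?_⟩
    rw [tpow_natural, tpow_natural, h]

/-- Let `C` be a triangulated category, `t : 𝟭_C ⟶ 𝟭_C` a natural
transformation of triangulated functors, `Σ = {t_X^n}` and `p : C ⟶ C[t⁻¹]` the canonical
functor to the Gabriel–Zisman localization of `C` at `Σ`. Then for an object `X` of `C`:
`p(X) ≅ 0` if and only if `t_X^n = 0` for some `n ≥ 0`. -/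
theorem stmt_2 (C : Type u) [Category.{v} C] [Preadditive C] [HasZeroObject C]
    [HasShift C ℤ] [∀ n : ℤ, (shiftFunctor C n).Additive] [Pretriangulated C]
    [IsTriangulated C]
    (t : 𝟭 C ⟶ 𝟭 C)
    (ht : ∀ (n : ℤ) (X : C), (shiftFunctor C n).map (t.app X) = t.app (X⟦n⟧))
    (X : C) :
    IsZero ((sigmaT t).Q.obj X) ↔ ∃ n : ℕ, tpow t X n = 0 := by
  constructor
  · intro hz
    have h : (sigmaT t).Q.map (𝟙 X) = (sigmaT t).Q.map (0 : X ⟶ X) := by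
      rw [CategoryTheory.Functor.map_id, (sigmaT t).Q.map_zero]
      exact (IsZero.iff_id_eq_zero _).1 hz
    rw [MorphismProperty.map_eq_iff_postcomp (W := sigmaT t) (sigmaT t).Q] at h
    obtain ⟨Z, s, ⟨n, rfl, rfl⟩, hfac⟩ := h
    simp only [Category.id_comp, zero_comp, eqToHom_refl, Category.comp_id] at hfac
    exact ⟨n, hfac⟩
  · rintro ⟨n, hn⟩
    have hmem : sigmaT t (tpow t X n) := ⟨n, rfl, by simp⟩
    have : IsIso ((sigmaT t).Q.map (tpow t X n)) :=
      Localization.inverts (sigmaT t).Q (sigmaT t) _ hmem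
    have h0 : (sigmaT t).Q.map (tpow t X n) = 0 := by
      rw [hn]; exact (sigmaT t).Q.map_zero _ _
    rw [IsZero.iff_id_eq_zero]
    obtain ⟨g, hg1, -⟩ := this.out
    rw [h0, zero_comp] at hg1
    exact hg1.symm
end

section
/- Let T be a triangulated category (a pretriangulated category satisfying the octahedral axiom) and let α : A → B, β : B → D, γ : A → C, δ : C → D be morphisms with β ∘ α = δ ∘ γ. Then one may complete α, β, γ, δ to distinguished triangles A → B → C(α) → A[1], C → D → C(δ) → C[1], A → C → C(γ) → A[1], B → D → C(β) → B[1], and there exist morphisms ε : C(α) → C(δ) and an object C(ε) with a distinguished triangle C(α) → C(δ) → C(ε) → C(α)[1], together with morphisms C(γ) → C(β) and C(β) → C(ε), such that in the resulting 4×4 diagram (with rows A → B → C(α) → A[1]; C → D → C(δ) → C[1]; C(γ) → C(β) → C(ε) → C(γ)[1]; A[1] → B[1] → C(α)[1] → A[2], and columns given by the vertical maps α-column A → C → C(γ) → A[1], etc.) all horizontal and vertical sequences are distinguished triangles, all squares commute, except the lower right square, which anticommutes. -/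
open CategoryTheory Limits Pretriangulated

universe v u

/-- the 4×4 lemma. Let `T` be a triangulated category and let
`α : A ⟶ B`, `β : B ⟶ D`, `γ : A ⟶ C`, `δ : C ⟶ D` satisfy `α ≫ β = γ ≫ δ`.
Then the four morphisms can be completed to distinguished triangles with cones
`Cα, Cδ, Cγ, Cβ`, and there are a morphism `ε : Cα ⟶ Cδ` with cone `Cε` and morphisms
`Cγ ⟶ Cβ ⟶ Cε` such that in the resulting 4×4 diagram all rows and columns are
distinguished triangles, all squares commute, except the lower right one, which
anticommutes. -/
theorem stmt_3 (T : Type u) [Category.{v} T] [Preadditive T] [HasZeroObject T]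
    [HasShift T ℤ] [∀ n : ℤ, (shiftFunctor T n).Additive] [Pretriangulated T]
    [IsTriangulated T]
    (A B C D : T) (α : A ⟶ B) (β : B ⟶ D) (γ : A ⟶ C) (δ : C ⟶ D)
    (hcomm : α ≫ β = γ ≫ δ) :
    ∃ (Cα Cδ Cγ Cβ Cε : T)
      (a₁ : B ⟶ Cα) (a₂ : Cα ⟶ A⟦(1:ℤ)⟧)
      (d₁ : D ⟶ Cδ) (d₂ : Cδ ⟶ C⟦(1:ℤ)⟧)
      (g₁ : C ⟶ Cγ) (g₂ : Cγ ⟶ A⟦(1:ℤ)⟧)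
      (b₁ : D ⟶ Cβ) (b₂ : Cβ ⟶ B⟦(1:ℤ)⟧)
      (ε : Cα ⟶ Cδ) (e₁ : Cδ ⟶ Cε) (e₂ : Cε ⟶ Cα⟦(1:ℤ)⟧)
      (m₁ : Cγ ⟶ Cβ) (m₂ : Cβ ⟶ Cε) (m₃ : Cε ⟶ Cγ⟦(1:ℤ)⟧),
      -- the first two rows are distinguished triangles
      (Triangle.mk α a₁ a₂ ∈ distTriang T) ∧
      (Triangle.mk δ d₁ d₂ ∈ distTriang T) ∧
      -- the first two columns are distinguished triangles
      (Triangle.mk γ g₁ g₂ ∈ distTriang T) ∧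
      (Triangle.mk β b₁ b₂ ∈ distTriang T) ∧
      -- the third row and third column are distinguished triangles
      (Triangle.mk m₁ m₂ m₃ ∈ distTriang T) ∧
      (Triangle.mk ε e₁ e₂ ∈ distTriang T) ∧
      -- all squares commute ...
      α ≫ β = γ ≫ δ ∧
      a₁ ≫ ε = β ≫ d₁ ∧
      ε ≫ d₂ = a₂ ≫ γ⟦(1:ℤ)⟧' ∧
      g₁ ≫ m₁ = δ ≫ b₁ ∧
      b₁ ≫ m₂ = d₁ ≫ e₁ ∧
      e₁ ≫ m₃ = d₂ ≫ g₁⟦(1:ℤ)⟧' ∧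
      m₁ ≫ b₂ = g₂ ≫ α⟦(1:ℤ)⟧' ∧
      m₂ ≫ e₂ = b₂ ≫ a₁⟦(1:ℤ)⟧' ∧
      -- ... except the lower right one, which anticommutes
      m₃ ≫ g₂⟦(1:ℤ)⟧' = -(e₂ ≫ a₂⟦(1:ℤ)⟧') := by

  -- the diagonal composite
  set η : A ⟶ D := α ≫ β with hη
  -- cones of the five morphisms
  obtain ⟨Cα, a₁, a₂, hTα⟩ := Pretriangulated.distinguished_cocone_triangle α
  obtain ⟨Cβ, b₁, b₂, hTβ⟩ := Pretriangulated.distinguished_cocone_triangle β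
  obtain ⟨Cγ, g₁, g₂, hTγ⟩ := Pretriangulated.distinguished_cocone_triangle γ
  obtain ⟨Cδ, d₁, d₂, hTδ⟩ := Pretriangulated.distinguished_cocone_triangle δ
  obtain ⟨Cη, h₁, h₂, hTη⟩ := Pretriangulated.distinguished_cocone_triangle η
  -- first octahedron: α ≫ β = η
  have O1 := Triangulated.someOctahedron (u₁₂ := α) (u₂₃ := β) (u₁₃ := η) rfl hTα hTβ hTη
  -- second octahedron: γ ≫ δ = η
  have O2 := Triangulated.someOctahedron (u₁₂ := γ) (u₂₃ := δ) (u₁₃ := η) hcomm.symm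
    hTγ hTδ hTη
  set p : Cα ⟶ Cη := O1.m₁
  set q : Cη ⟶ Cβ := O1.m₃
  set r : Cγ ⟶ Cη := O2.m₁
  set s : Cη ⟶ Cδ := O2.m₃
  -- cone of ε := p ≫ s
  obtain ⟨Cε, e₁, e₂, hTε⟩ := Pretriangulated.distinguished_cocone_triangle (p ≫ s)
  -- triangle over p (from O1) and over s (rotation of O2's triangle)
  have hTp : Triangle.mk p q (b₂ ≫ a₁⟦(1:ℤ)⟧') ∈ distTriang T := O1.mem
  have hTs : Triangle.mk s (d₂ ≫ g₁⟦(1:ℤ)⟧') (-r⟦(1:ℤ)⟧') ∈ distTriang T :=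
    Pretriangulated.rot_of_distTriang _ O2.mem
  -- third octahedron: p ≫ s = ε
  have O3 := Triangulated.someOctahedron (u₁₂ := p) (u₂₃ := s) (u₁₃ := p ≫ s) rfl
    hTp hTs hTε
  refine ⟨Cα, Cδ, Cγ, Cβ, Cε, a₁, a₂, d₁, d₂, g₁, g₂, b₁, b₂, p ≫ s, e₁, e₂,
    r ≫ q, O3.m₁, O3.m₃, hTα, hTδ, hTγ, hTβ, ?_, hTε, hcomm, ?_, ?_, ?_, ?_,
    O3.comm₃, ?_, O3.comm₂, ?_⟩
  · -- third row is distinguished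
    rw [Pretriangulated.rotate_distinguished_triangle]
    refine Pretriangulated.isomorphic_distinguished _ O3.mem _ ?_
    refine Triangle.isoMk _ _ (Iso.refl _) (Iso.refl _) (Iso.refl _) ?_ ?_ ?_ <;>
      simp [Functor.map_comp]
    · exact (Category.comp_id _).trans (Category.id_comp _).symm
    · exact (Category.comp_id _).trans (Category.id_comp _).symm
    · exact (by rw [CategoryTheory.Functor.map_id, Category.comp_id, Functor.map_comp] :
        (-(shiftFunctor T (1:ℤ)).map (r ≫ q)) ≫ (shiftFunctor T (1:ℤ)).map (𝟙 Cβ) =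
          -(shiftFunctor T (1:ℤ)).map r ≫ (shiftFunctor T (1:ℤ)).map q).trans (Category.id_comp _).symm
  · -- a₁ ≫ ε = β ≫ d₁
    rw [← Category.assoc, O1.comm₁, Category.assoc, O2.comm₃]
  · -- ε ≫ d₂ = a₂ ≫ γ⟦1⟧'
    rw [Category.assoc, ← O2.comm₄, ← Category.assoc, O1.comm₂]
  · -- g₁ ≫ (r ≫ q) = δ ≫ b₁
    rw [← Category.assoc, O2.comm₁, Category.assoc, O1.comm₃]
  · -- b₁ ≫ m₂ = d₁ ≫ e₁
    rw [← O1.comm₃, ← O2.comm₃, Category.assoc, Category.assoc, O3.comm₁]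
  · -- (r ≫ q) ≫ b₂ = g₂ ≫ α⟦1⟧'
    rw [Category.assoc, ← O1.comm₄, ← Category.assoc, O2.comm₂]
  · -- anticommutativity of the lower right square
    have h4 := O3.comm₄
    have hr : O3.m₃ ≫ r⟦(1:ℤ)⟧' = -(e₂ ≫ p⟦(1:ℤ)⟧') := by
      rw [← neg_neg (O3.m₃ ≫ r⟦(1:ℤ)⟧')]
      congr 1
      rw [← Preadditive.comp_neg, ← h4]
    rw [← O2.comm₂, Functor.map_comp, ← Category.assoc, hr, Preadditive.neg_comp,
      Category.assoc, ← Functor.map_comp, O1.comm₂]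
end

section
/- Let k be a commutative ring and let T be a k-linear triangulated category with split idempotents such that for all objects X and Y the k-module Hom_T(X,Y) has finite composition length. If M is an object of T with Hom_T(M, M[1]) = 0, then M is minimal with respect to the relation ⪯_Δ: more precisely, for any object N of T, N ⪯_Δ M implies N ≅ M. -/
open CategoryTheory Limits Pretriangulated

universe v u w

section DeltaRelation

variable (T : Type u) [Category.{v} T] [Preadditive T] [HasZeroObject T]
  [HasShift T ℤ] [∀ n : ℤ, (shiftFunctor T n).Additive] [Pretriangulated T]

/-- One step of triangle degeneration: `X ≤_Δ Y` in one step when there are an object `Z`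
and a distinguished triangle `Z → Z ⊞ X → Y → Z⟦1⟧`. -/
def deltaStep (X Y : T) : Prop :=
  ∃ (Z : T) (v : Z ⟶ Z) (u : Z ⟶ X) (w : Z ⊞ X ⟶ Y) (d : Y ⟶ Z⟦(1:ℤ)⟧),
    Triangle.mk (biprod.lift v u) w d ∈ distTriang T

/-- `⪯_Δ` : the smallest transitive relation containing `deltaStep`. -/
def deltaLE (X Y : T) : Prop :=
  Relation.TransGen (deltaStep T) X Y

end DeltaRelation


theorem auxIsUnitOfLeftInv {R : Type*} [Ring R] [Nontrivial R]
    (hid : ∀ e : R, e * e = e → e = 0 ∨ e = 1) {a z : R} (h : z * a = 1) : IsUnit a := by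
  have h2 : (a * z) * (a * z) = a * z := by
    rw [mul_assoc, ← mul_assoc z a z, h, one_mul]
  rcases hid _ h2 with h0 | h1
  · exfalso
    have ha : a = 0 := by
      calc a = a * (z * a) := by rw [h, mul_one]
        _ = (a * z) * a := by rw [mul_assoc]
        _ = 0 := by rw [h0, zero_mul]
    rw [ha, mul_zero] at h
    exact zero_ne_one h
  · exact ⟨⟨a, z, h1, h⟩, rfl⟩

theorem auxIsUnitOrIsNilpotent {R : Type*} [Ring R] [Nontrivial R]
    [IsNoetherian R R] [IsArtinian R R]
    (hid : ∀ e : R, e * e = e → e = 0 ∨ e = 1) (a : R) : IsUnit a ∨ IsNilpotent a := by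
  set f : R →ₗ[R] R := LinearMap.toSpanSingleton R R a with hf
  have hfa : ∀ (n : ℕ) (x : R), (f ^ n) x = x * a ^ n := by
    intro n
    induction n with
    | zero => intro x; simp
    | succ n ih =>
      intro x
      rw [pow_succ f n, Module.End.mul_apply]
      have : f x = x * a := by simp [hf, LinearMap.toSpanSingleton_apply, smul_eq_mul]
      rw [this, ih, mul_assoc, ← pow_succ' a n]
  obtain ⟨m, hm⟩ := Filter.eventually_atTop.mp (LinearMap.eventually_isCompl_ker_pow_range_pow f)
  have hc := hm (m + 1) (Nat.le_succ m)
  have htop : (1 : R) ∈ (LinearMap.ker (f ^ (m+1)) ⊔ LinearMap.range (f ^ (m+1))) := by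
    rw [hc.sup_eq_top]; trivial
  obtain ⟨x, hx, y, hy, hxy⟩ := Submodule.mem_sup.mp htop
  have h1 : y * x + y * y = y := by rw [← mul_add, hxy, mul_one]
  have hker : y * x ∈ LinearMap.ker (f ^ (m+1)) := by
    simpa [smul_eq_mul] using Submodule.smul_mem _ y hx
  have hrange : y * y ∈ LinearMap.range (f ^ (m+1)) := by
    simpa [smul_eq_mul] using Submodule.smul_mem _ y hy
  have h2 : y * x = y - y * y := eq_sub_of_add_eq h1
  have hker' : y * x ∈ LinearMap.range (f ^ (m+1)) := by
    rw [h2]; exact sub_mem hy hrange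
  have h0 : y * x = 0 := Submodule.disjoint_def.mp hc.disjoint _ hker hker'
  have hyy : y * y = y := by rw [h0, zero_add] at h1; exact h1
  rcases hid y hyy with hy0 | hy1
  · right
    refine ⟨m + 1, ?_⟩
    have hx1 : x = 1 := by rw [hy0, add_zero] at hxy; exact hxy
    have : (f ^ (m+1)) x = 0 := LinearMap.mem_ker.mp hx
    rw [hfa, hx1, one_mul] at this
    exact this
  · left
    rw [hy1] at hy
    obtain ⟨z, hz⟩ := hy
    rw [hfa] at hz
    have : (z * a ^ m) * a = 1 := by rw [mul_assoc, ← pow_succ a m]; exact hz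
    exact auxIsUnitOfLeftInv hid this


open CategoryTheory Limits



section Cancel

variable {k : Type w} [CommRing k]
variable {T : Type u} [Category.{v} T] [Preadditive T] [CategoryTheory.Linear k T]
  [HasBinaryBiproducts T] [IsIdempotentComplete T]

/-- Reinterpret an endomorphism as an element of the endomorphism ring. -/
def toEnd {T : Type u} [Category.{v} T] {Z : T} (a : Z ⟶ Z) : End Z := a

/-- Conjugation `g ↦ r ≫ g ≫ s` as a `k`-linear map on Hom-modules. -/
def conjMap (k : Type w) [CommRing k] {T : Type u} [Category.{v} T] [Preadditive T]
    [CategoryTheory.Linear k T] {A Z : T} (r : Z ⟶ A) (s : A ⟶ Z) :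
    (A ⟶ A) →ₗ[k] (Z ⟶ Z) where
  toFun g := r ≫ g ≫ s
  map_add' g h := by simp [Preadditive.comp_add, Preadditive.add_comp]
  map_smul' c g := by simp

omit [HasBinaryBiproducts T] [IsIdempotentComplete T] in
theorem conjMap_injective {A Z : T} (r : Z ⟶ A) (s : A ⟶ Z) (hsr : s ≫ r = 𝟙 A) :
    Function.Injective (conjMap k r s) := by
  intro g h hgh
  have h2 := congrArg (fun x => s ≫ x ≫ r) hgh
  dsimp [conjMap] at h2
  simpa [reassoc_of% hsr, hsr] using h2

omit [HasBinaryBiproducts T] [IsIdempotentComplete T] in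
theorem conjMap_range_ne_top {A Z : T} (r : Z ⟶ A) (s : A ⟶ Z) (hsr : s ≫ r = 𝟙 A)
    (hne : r ≫ s ≠ 𝟙 Z) : LinearMap.range (conjMap k r s) ≠ ⊤ := by
  intro htop
  have hmem : (𝟙 Z) ∈ LinearMap.range (conjMap k r s) := htop ▸ Submodule.mem_top
  obtain ⟨g, hg⟩ := hmem
  apply hne
  have h1 : (r ≫ g ≫ s) ≫ (𝟙 Z - r ≫ s) = 0 := by
    simp only [Preadditive.comp_sub, Category.comp_id, Category.assoc]
    rw [← Category.assoc s r, hsr, Category.id_comp, sub_self]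
  dsimp [conjMap] at hg
  rw [hg] at h1
  simp only [Category.id_comp] at h1
  rw [sub_eq_zero] at h1
  exact h1.symm

theorem cancelAux
    (hfl : ∀ X Y : T, IsFiniteLength k (X ⟶ Y)) (Ω : T)
    (S : Submodule k (Ω ⟶ Ω)) :
    ∀ (Z X Y : T) (ψ : (Z ⟶ Z) →ₗ[k] (Ω ⟶ Ω)), Function.Injective ψ →
      LinearMap.range ψ ≤ S → (Z ⊞ X ≅ Z ⊞ Y) → Nonempty (X ≅ Y) := by
  have hart : IsArtinian k (Ω ⟶ Ω) :=
    (isFiniteLength_iff_isNoetherian_isArtinian.mp (hfl _ _)).2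
  induction S using IsArtinian.induction with
  | _ S IH =>
  intro Z X Y ψ hinj hle b
  by_cases h1 : (𝟙 Z : Z ⟶ Z) = 0
  · -- Z ≅ 0, so biprod projections are isos
    have hinlX : (biprod.inl : Z ⟶ Z ⊞ X) = 0 := by
      rw [← Category.id_comp (biprod.inl : Z ⟶ Z ⊞ X), h1, Limits.zero_comp]
    have hinlY : (biprod.inl : Z ⟶ Z ⊞ Y) = 0 := by
      rw [← Category.id_comp (biprod.inl : Z ⟶ Z ⊞ Y), h1, Limits.zero_comp]
    have eX : X ≅ Z ⊞ X :=
      ⟨biprod.inr, biprod.snd, by simp, by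
        apply biprod.hom_ext' <;> simp [hinlX]⟩
    have eY : Y ≅ Z ⊞ Y :=
      ⟨biprod.inr, biprod.snd, by simp, by
        apply biprod.hom_ext' <;> simp [hinlY]⟩
    exact ⟨eX ≪≫ b ≪≫ eY.symm⟩
  by_cases h2 : ∃ e : Z ⟶ Z, e ≫ e = e ∧ e ≠ 0 ∧ e ≠ 𝟙 Z
  · obtain ⟨e, he, he0, he1⟩ := h2
    obtain ⟨A, iA, rA, hA1, hA2⟩ := IsIdempotentComplete.idempotents_split Z e he
    have he' : (𝟙 Z - e) ≫ (𝟙 Z - e) = 𝟙 Z - e := by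
      simp [Preadditive.sub_comp, Preadditive.comp_sub, he]
    obtain ⟨B, iB, rB, hB1, hB2⟩ := IsIdempotentComplete.idempotents_split Z _ he'
    have hiAe : iA ≫ e = iA := by rw [← hA2, ← Category.assoc, hA1, Category.id_comp]
    have hiBe : iB ≫ e = 0 := by
      have h' : iB ≫ (𝟙 Z - e) = iB := by
        rw [← hB2, ← Category.assoc, hB1, Category.id_comp]
      simp only [Preadditive.comp_sub, Category.comp_id] at h'
      rw [sub_eq_self] at h'
      exact h'
    have hiArB : iA ≫ rB = 0 := by
      have h' : iA ≫ (rB ≫ iB) = 0 := by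
        rw [hB2]
        simp [Preadditive.comp_sub, hiAe]
      have h'' := congrArg (fun x => x ≫ rB) h'
      simpa [Category.assoc, hB1] using h''
    have hiBrA : iB ≫ rA = 0 := by
      have h' : iB ≫ (rA ≫ iA) = 0 := by rw [hA2, hiBe]
      have h'' := congrArg (fun x => x ≫ rA) h'
      simpa [Category.assoc, hA1] using h''
    have hsum : rA ≫ iA + rB ≫ iB = 𝟙 Z := by rw [hA2, hB2]; abel
    have hsum' : ∀ {W' : T} (t : Z ⟶ W'), rA ≫ iA ≫ t + rB ≫ iB ≫ t = t := by
      intro W' t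
      rw [← Category.assoc, ← Category.assoc, ← Preadditive.add_comp, hsum, Category.id_comp]
    -- the isos A ⊞ (B ⊞ W) ≅ Z ⊞ W for W = X, Y
    have mkIso : ∀ W : T, Nonempty ((A ⊞ (B ⊞ W)) ≅ (Z ⊞ W)) := by
      intro W
      refine ⟨⟨biprod.desc (iA ≫ biprod.inl) (biprod.desc (iB ≫ biprod.inl) biprod.inr),
        biprod.lift (biprod.fst ≫ rA) (biprod.lift (biprod.fst ≫ rB) biprod.snd), ?_, ?_⟩⟩
      · ext <;>
          simp [hA1, hB1, hiArB, hiBrA, reassoc_of% hiArB, reassoc_of% hiBrA,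
            reassoc_of% hA1, reassoc_of% hB1, hsum']
      · ext <;>
          simp [hA1, hB1, hiArB, hiBrA, reassoc_of% hiArB, reassoc_of% hiBrA,
            reassoc_of% hA1, reassoc_of% hB1, biprod.lift_desc, hsum']
    obtain ⟨eA_X⟩ := mkIso X
    obtain ⟨eA_Y⟩ := mkIso Y
    -- cancel A
    have hAne : LinearMap.range (conjMap k rA iA) ≠ ⊤ :=
      conjMap_range_ne_top rA iA hA1 (by rw [hA2]; exact he1)
    have hBne : LinearMap.range (conjMap k rB iB) ≠ ⊤ :=
      conjMap_range_ne_top rB iB hB1 (by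
        rw [hB2]
        intro hcon
        apply he0
        have := congrArg (fun x => 𝟙 Z - x) hcon
        simpa using this)
    have hstepA : Submodule.map ψ (LinearMap.range (conjMap k rA iA)) < S := by
      refine lt_of_lt_of_le (Submodule.map_strictMono_of_injective hinj
        (lt_top_iff_ne_top.mpr hAne)) ?_
      rw [Submodule.map_top, LinearMap.range_eq_map]
      exact le_trans (le_of_eq (by rw [← LinearMap.range_eq_map])) hle
    have hstepB : Submodule.map ψ (LinearMap.range (conjMap k rB iB)) < S := by
      refine lt_of_lt_of_le (Submodule.map_strictMono_of_injective hinj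
        (lt_top_iff_ne_top.mpr hBne)) ?_
      rw [Submodule.map_top, LinearMap.range_eq_map]
      exact le_trans (le_of_eq (by rw [← LinearMap.range_eq_map])) hle
    obtain ⟨cB⟩ := IH _ hstepA A (B ⊞ X) (B ⊞ Y) (ψ.comp (conjMap k rA iA))
      (hinj.comp (conjMap_injective rA iA hA1))
      (by rw [LinearMap.range_comp])
      (eA_X ≪≫ b ≪≫ eA_Y.symm)
    exact IH _ hstepB B X Y (ψ.comp (conjMap k rB iB))
      (hinj.comp (conjMap_injective rB iB hB1))
      (by rw [LinearMap.range_comp]) cB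
  · -- End Z is nontrivial with only trivial idempotents
    push_neg at h2
    have hid : ∀ e : End Z, e * e = e → e = 0 ∨ e = 1 := by
      intro e hee
      rcases eq_or_ne e 0 with h | h
      · exact Or.inl h
      · exact Or.inr (h2 e (by simpa [End.mul_def] using hee) h)
    haveI : Nontrivial (End Z) := ⟨⟨𝟙 Z, 0, h1⟩⟩
    have hfin : IsFiniteLength k (End Z) := hfl Z Z
    haveI hnoe : IsNoetherian k (End Z) := (isFiniteLength_iff_isNoetherian_isArtinian.mp hfin).1
    haveI hart2 : IsArtinian k (End Z) := (isFiniteLength_iff_isNoetherian_isArtinian.mp hfin).2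
    haveI : IsNoetherian (End Z) (End Z) := isNoetherian_of_tower k hnoe
    haveI : IsArtinian (End Z) (End Z) := isArtinian_of_tower k hart2
    have unitIso : ∀ a : Z ⟶ Z, IsUnit (toEnd a) → IsIso a := by
      intro a ha
      refine ⟨ha.unit.inv, ?_, ?_⟩
      · have h' := ha.unit.inv_mul
        rw [IsUnit.unit_spec] at h'
        exact h'
      · have h' := ha.unit.mul_inv
        rw [IsUnit.unit_spec] at h'
        exact h'
    by_cases hu : IsUnit (toEnd (biprod.inl ≫ b.hom ≫ biprod.fst))
    · haveI : IsIso (biprod.inl ≫ b.hom ≫ biprod.fst) := unitIso _ hu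
      exact ⟨Biprod.isoElim b⟩
    · set A1 : Z ⟶ Z := biprod.inl ≫ b.hom ≫ biprod.fst with hA1d
      set A2 : Z ⟶ Z := biprod.inl ≫ b.inv ≫ biprod.fst with hA2d
      set B1 : Z ⟶ Y := biprod.inl ≫ b.hom ≫ biprod.snd with hB1d
      set G1 : Y ⟶ Z := biprod.inr ≫ b.inv ≫ biprod.fst with hG1d
      have key : A1 ≫ A2 + B1 ≫ G1 = 𝟙 Z := by
        rw [hA1d, hA2d, hB1d, hG1d]
        simp only [Category.assoc]
        rw [show biprod.inl ≫ b.hom ≫ biprod.fst ≫ biprod.inl ≫ b.inv ≫ biprod.fst +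
            biprod.inl ≫ b.hom ≫ biprod.snd ≫ biprod.inr ≫ b.inv ≫ biprod.fst
            = biprod.inl ≫ b.hom ≫ ((biprod.fst ≫ biprod.inl + biprod.snd ≫ biprod.inr) ≫
              (b.inv ≫ biprod.fst)) from by
          simp only [Preadditive.add_comp, Preadditive.comp_add, Category.assoc]]
        rw [biprod.total]
        simp
      have hq : ¬ IsUnit (toEnd (A1 ≫ A2)) := by
        intro hq'
        apply hu
        obtain ⟨w, hw⟩ : ∃ w : End Z, w * toEnd (A1 ≫ A2) = 1 := by
          refine ⟨hq'.unit.inv, ?_⟩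
          have h' := hq'.unit.inv_mul
          rw [IsUnit.unit_spec] at h'
          exact h'
        have hmul : toEnd (A1 ≫ A2) = toEnd A2 * toEnd A1 := rfl
        rw [hmul, ← mul_assoc] at hw
        exact auxIsUnitOfLeftInv hid hw
      have hnq := (auxIsUnitOrIsNilpotent hid (toEnd (A1 ≫ A2))).resolve_left hq
      have hβγ : IsUnit (toEnd (B1 ≫ G1)) := by
        have key' : toEnd (A1 ≫ A2) + toEnd (B1 ≫ G1) = 1 := key
        have hsub : toEnd (B1 ≫ G1) = 1 - toEnd (A1 ≫ A2) := eq_sub_of_add_eq' key'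
        rw [hsub]
        exact hnq.isUnit_one_sub
      set τ : Y ⟶ Z := G1 ≫ hβγ.unit.inv with hτd
      have hστ : B1 ≫ τ = 𝟙 Z := by
        have h' := hβγ.unit.inv_mul
        rw [IsUnit.unit_spec] at h'
        have h'' : (B1 ≫ G1) ≫ hβγ.unit.inv = 𝟙 Z := h'
        rw [hτd, ← Category.assoc]
        exact h''
      set θ : Z ⊞ Y ⟶ Z ⊞ Y :=
        biprod.desc (biprod.lift 0 B1) (biprod.lift τ (𝟙 Y - τ ≫ B1)) with hθd
      have hθθ : θ ≫ θ = 𝟙 (Z ⊞ Y) := by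
        rw [hθd]
        ext <;>
          simp [biprod.lift_desc, Preadditive.sub_comp, Preadditive.comp_sub,
            hστ, reassoc_of% hστ]
      have hθf : θ ≫ biprod.fst = biprod.snd ≫ τ := by
        rw [hθd]
        apply biprod.hom_ext' <;> simp
      have hcor : biprod.inl ≫ b.hom ≫ θ ≫ biprod.fst = 𝟙 Z := by
        rw [hθf]
        have h3 := hστ
        rw [hB1d] at h3
        simpa [Category.assoc] using h3
      haveI : IsIso (biprod.inl ≫ (b ≪≫ (⟨θ, θ, hθθ, hθθ⟩ : Z ⊞ Y ≅ Z ⊞ Y)).hom ≫ biprod.fst) := by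
        simp only [Iso.trans_hom, Category.assoc]
        rw [hcor]
        infer_instance
      exact ⟨Biprod.isoElim (b ≪≫ (⟨θ, θ, hθθ, hθθ⟩ : Z ⊞ Y ≅ Z ⊞ Y))⟩

/-- Cancellation of a common biproduct summand. -/
theorem cancel_biprod
    (hfl : ∀ X Y : T, IsFiniteLength k (X ⟶ Y))
    (Z X Y : T) (b : Z ⊞ X ≅ Z ⊞ Y) : Nonempty (X ≅ Y) :=
  cancelAux hfl Z ⊤ Z X Y LinearMap.id Function.injective_id le_top b

end Cancel

section Step

variable {k : Type w} [CommRing k]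
variable {T : Type u} [Category.{v} T] [Preadditive T] [HasZeroObject T]
  [HasShift T ℤ] [∀ n : ℤ, (shiftFunctor T n).Additive] [Pretriangulated T]
  [CategoryTheory.Linear k T] [IsIdempotentComplete T]

theorem deltaStep_iso (hfl : ∀ X Y : T, IsFiniteLength k (X ⟶ Y))
    {X Y : T} (hY : ∀ f : Y ⟶ Y⟦(1:ℤ)⟧, f = 0) (h : deltaStep T X Y) :
    Nonempty (X ≅ Y) := by
  obtain ⟨Z, v, u, w, d, hT⟩ := h
  -- Step 1 : d ≫ v⟦1⟧ = 0
  have hdv : d ≫ (shiftFunctor T (1:ℤ)).map v = 0 := by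
    have h31 : d ≫ (shiftFunctor T (1:ℤ)).map (biprod.lift v u) = 0 := comp_distTriang_mor_zero₃₁ _ hT
    have h' : d ≫ (shiftFunctor T (1:ℤ)).map (biprod.lift v u ≫ biprod.fst) = 0 := by
      rw [Functor.map_comp, ← Category.assoc, h31, Limits.zero_comp]
    simpa using h'
  -- Step 2 : every map e : Y ⟶ Z⟦1⟧ killed by w⟦1⟧-composition factors through v⟦1⟧
  have hfact : ∀ e : Y ⟶ Z⟦(1:ℤ)⟧,
      ∃ e' : Y ⟶ Z⟦(1:ℤ)⟧, e = e' ≫ (shiftFunctor T (1:ℤ)).map v := by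
    intro e
    obtain ⟨g, hg⟩ : ∃ g : Y ⟶ Z⟦(1:ℤ)⟧, e ≫ (shiftFunctor T (1:ℤ)).map biprod.inl =
        g ≫ (-(shiftFunctor T (1:ℤ)).map (biprod.lift v u)) := Triangle.coyoneda_exact₁ _
      (rot_of_distTriang _ hT) (e ≫ (shiftFunctor T (1:ℤ)).map biprod.inl)
      (by
        change (e ≫ (shiftFunctor T (1:ℤ)).map biprod.inl) ≫ (shiftFunctor T (1:ℤ)).map w = 0
        rw [Category.assoc, ← Functor.map_comp]
        exact hY _)
    refine ⟨-g, ?_⟩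
    have h2 := congrArg (fun x => x ≫ (shiftFunctor T (1:ℤ)).map biprod.fst) hg
    simp only [Category.assoc, ← Functor.map_comp, biprod.inl_fst, biprod.lift_fst,
      CategoryTheory.Functor.map_id, Category.comp_id, Preadditive.neg_comp,
      Preadditive.comp_neg] at h2
    rw [h2]
    simp
  -- Step 3 : d = 0 by a Fitting-type argument
  letI φ : (Y ⟶ Z⟦(1:ℤ)⟧) →ₗ[k] (Y ⟶ Z⟦(1:ℤ)⟧) :=
    Linear.rightComp k Y ((shiftFunctor T (1:ℤ)).map v)
  have hrange : ∀ n : ℕ, ∃ e, d = (φ ^ n) e := by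
    intro n
    induction n with
    | zero => exact ⟨d, by simp⟩
    | succ n ih =>
      obtain ⟨e, he⟩ := ih
      obtain ⟨e', he'⟩ := hfact e
      refine ⟨e', ?_⟩
      rw [pow_succ, Module.End.mul_apply]
      rw [show φ e' = e from by rw [he']; rfl]
      exact he
  have hker : φ d = 0 := by
    show d ≫ (shiftFunctor T (1:ℤ)).map v = 0
    exact hdv
  haveI : IsNoetherian k (Y ⟶ Z⟦(1:ℤ)⟧) :=
    (isFiniteLength_iff_isNoetherian_isArtinian.mp (hfl _ _)).1
  obtain ⟨m, hm⟩ := Filter.eventually_atTop.mp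
    (Module.End.eventually_disjoint_ker_pow_range_pow φ)
  have hd0 : d = 0 := by
    obtain ⟨e, he⟩ := hrange (m+1)
    refine Submodule.disjoint_def.mp (hm (m+1) (Nat.le_succ m)) d ?_ ⟨e, he.symm⟩
    rw [LinearMap.mem_ker, pow_succ, Module.End.mul_apply, hker, map_zero]
  -- Step 4 : split triangle
  have hT' : Triangle.mk (biprod.lift v u) w (0 : Y ⟶ Z⟦(1:ℤ)⟧) ∈ distTriang T := by
    rw [← hd0]; exact hT
  obtain ⟨p, hp⟩ : ∃ p : Z ⊞ X ⟶ Z, 𝟙 Z = biprod.lift v u ≫ p :=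
    Triangle.yoneda_exact₂ _ (inv_rot_of_distTriang _ hT') (𝟙 Z)
    (by
      change (-(shiftFunctor T (-1 : ℤ)).map (0 : Y ⟶ Z⟦(1:ℤ)⟧) ≫
        (shiftFunctorCompIsoId T (1:ℤ) (-1) (by omega)).hom.app Z) ≫ 𝟙 Z = 0
      simp)
  have hfw : biprod.lift v u ≫ w = 0 := comp_distTriang_mor_zero₁₂ _ hT
  let mor : Triangle.mk (biprod.lift v u) w (0 : Y ⟶ Z⟦(1:ℤ)⟧) ⟶ binaryBiproductTriangle Z Y :=
    { hom₁ := 𝟙 Z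
      hom₂ := biprod.lift p w
      hom₃ := 𝟙 Y
      comm₁ := by
        dsimp [binaryBiproductTriangle]
        change biprod.lift v u ≫ biprod.lift p w = 𝟙 Z ≫ (biprod.inl : Z ⟶ Z ⊞ Y)
        apply biprod.hom_ext
        · simp [← hp]
        · simp [hfw]
      comm₂ := by dsimp [binaryBiproductTriangle]; change w ≫ 𝟙 Y = biprod.lift p w ≫ biprod.snd; simp
      comm₃ := by
        dsimp [binaryBiproductTriangle]
        change (0 : Y ⟶ Z⟦(1:ℤ)⟧) ≫ (shiftFunctor T (1:ℤ)).map (𝟙 Z) = 𝟙 Y ≫ 0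
        simp }
  haveI : IsIso (biprod.lift p w) := by
    have := isIso₂_of_isIso₁₃ mor hT' (binaryBiproductTriangle_distinguished Z Y)
      (by change IsIso (𝟙 Z); infer_instance) (by change IsIso (𝟙 Y); infer_instance)
    exact this
  exact cancel_biprod hfl Z X Y (asIso (biprod.lift p w))

end Step


/-- Let `k` be a commutative ring and `T` a `k`-linear triangulated
category with split idempotents in which all Hom-spaces `Hom_T(X,Y)` have finite
composition length as `k`-modules. If `M` is an object with `Hom_T(M, M[1]) = 0`, then `M`
is minimal for `⪯_Δ`: for any object `N`, `N ⪯_Δ M` implies `N ≅ M`. -/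
theorem stmt_7 (k : Type w) [CommRing k]
    (T : Type u) [Category.{v} T] [Preadditive T] [HasZeroObject T]
    [HasShift T ℤ] [∀ n : ℤ, (shiftFunctor T n).Additive] [Pretriangulated T]
    [IsTriangulated T] [CategoryTheory.Linear k T] [IsIdempotentComplete T]
    (hfl : ∀ X Y : T, IsFiniteLength k (X ⟶ Y))
    (M : T) (hM : ∀ f : M ⟶ M⟦(1:ℤ)⟧, f = 0)
    (N : T) (hNM : deltaLE T N M) :
    Nonempty (N ≅ M) := by
  have key : ∀ (P : T), Relation.TransGen (deltaStep T) N P →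
      (∀ f : P ⟶ P⟦(1:ℤ)⟧, f = 0) → Nonempty (N ≅ P) := by
    intro P hP
    induction hP with
    | single h =>
      intro hprop
      exact deltaStep_iso hfl hprop h
    | @tail b c hab hbc ih =>
      intro hc
      obtain ⟨e⟩ := deltaStep_iso hfl hc hbc
      have hb : ∀ f : b ⟶ b⟦(1:ℤ)⟧, f = 0 := by
        intro f
        have h0 : e.inv ≫ f ≫ (shiftFunctor T (1:ℤ)).map e.hom = 0 := hc _
        have hrw : f = e.hom ≫ (e.inv ≫ f ≫ (shiftFunctor T (1:ℤ)).map e.hom) ≫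
            (shiftFunctor T (1:ℤ)).map e.inv := by
          simp [← Functor.map_comp]
        rw [hrw, h0]
        simp
      obtain ⟨e'⟩ := ih hb
      exact ⟨e'.trans e⟩
  exact key M hNM hM
end

section
/- Let T be a triangulated category and let Z →(v,u)ᵗ Z ⊕ M →(h,j) N →0 Z[1] be a distinguished triangle whose connecting morphism N → Z[1] is zero (i.e. the triangle is split), and suppose the endomorphism v : Z → Z lies in the Jacobson radical of the endomorphism ring End_T(Z). Then M is isomorphic to N, even if T is not a Krull–Schmidt category. -/
open CategoryTheory Limits Pretriangulated

universe v u


/-- In a possibly noncommutative ring, if `x` lies in the Jacobson radical (of `⊥`),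
then `y * x + 1` is a unit. -/
private lemma isUnit_mul_mem_jacobson_add_one {R : Type*} [Ring R] {x : R}
    (hx : x ∈ (⊥ : Ideal R).jacobson) (y : R) : IsUnit (y * x + 1) := by
  obtain ⟨z, hz⟩ := Ideal.mem_jacobson_iff.mp hx y
  rw [Ideal.mem_bot, sub_eq_zero] at hz
  -- hz : z * y * x + z = 1, so `z` is a left inverse of `y * x + 1`
  have hz1 : z * (y * x + 1) = 1 := by rw [mul_add, mul_one, ← mul_assoc]; exact hz
  -- get a left inverse `w` of `z` as well
  obtain ⟨w, hw⟩ := Ideal.mem_jacobson_iff.mp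
    ((⊥ : Ideal R).jacobson.neg_mem (Ideal.mul_mem_left _ (z * y) hx)) 1
  rw [Ideal.mem_bot, sub_eq_zero, mul_one] at hw
  -- hw : w * -(z * y * x) + w = 1
  have hz2 : z = 1 - z * y * x := by rw [eq_sub_iff_add_eq, add_comm]; exact hz
  have hwz : w * z = 1 := by
    have : w * z = w * -(z * y * x) + w := by nth_rewrite 1 [hz2]; noncomm_ring
    rw [this]; exact hw
  have hwe : w = y * x + 1 := by
    calc w = w * (z * (y * x + 1)) := by rw [hz1, mul_one]
      _ = w * z * (y * x + 1) := by rw [mul_assoc]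
      _ = y * x + 1 := by rw [hwz, one_mul]
  exact ⟨⟨y * x + 1, z, by rw [← hwe]; exact hwz, hz1⟩, rfl⟩

/-- In a possibly noncommutative ring, if `x` lies in the Jacobson radical (of `⊥`),
then `x * y + 1` is a unit. -/
private lemma isUnit_mem_jacobson_mul_add_one {R : Type*} [Ring R] {x : R}
    (hx : x ∈ (⊥ : Ideal R).jacobson) (y : R) : IsUnit (x * y + 1) := by
  obtain ⟨U, hU⟩ := isUnit_mul_mem_jacobson_add_one hx y
  have h1 : (y * x + 1) * (↑U⁻¹ : R) = 1 := by rw [← hU, U.mul_inv]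
  have h2 : (↑U⁻¹ : R) * (y * x + 1) = 1 := by rw [← hU, U.inv_mul]
  set z : R := (↑U⁻¹ : R) with hzdef
  have e1 : (x * y + 1) * (1 - x * z * y) = 1 + x * y - x * ((y * x + 1) * z) * y := by
    noncomm_ring
  have e2 : (1 - x * z * y) * (x * y + 1) = 1 + x * y - x * (z * (y * x + 1)) * y := by
    noncomm_ring
  rw [h1] at e1
  rw [h2] at e2
  refine ⟨⟨x * y + 1, 1 - x * z * y, ?_, ?_⟩, rfl⟩
  · rw [e1]; noncomm_ring
  · rw [e2]; noncomm_ring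

set_option maxHeartbeats 1000000 in
/-- Let `T` be a triangulated category and let
`Z →(v,u)ᵗ Z ⊞ M →(h,j) N →0 Z⟦1⟧` be a distinguished triangle whose connecting morphism
`N → Z⟦1⟧` is zero (a split triangle), and suppose `v : Z → Z` lies in the Jacobson radical
of the endomorphism ring `End_T(Z)` (the intersection of all maximal left ideals).
Then `M ≅ N`. -/
theorem stmt_8 (T : Type u) [Category.{v} T] [Preadditive T] [HasZeroObject T]
    [HasShift T ℤ] [∀ n : ℤ, (shiftFunctor T n).Additive] [Pretriangulated T]
    [IsTriangulated T]
    (Z M N : T) (v : End Z) (u : Z ⟶ M) (h : Z ⟶ N) (j : M ⟶ N)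
    (hdist : Triangle.mk (biprod.lift (v : Z ⟶ Z) u) (biprod.desc h j)
      (0 : N ⟶ Z⟦(1:ℤ)⟧) ∈ distTriang T)
    (hv : v ∈ (⊥ : Ideal (End Z)).jacobson) :
    Nonempty (M ≅ N) := by
  -- a section of `biprod.desc h j` coming from the vanishing of the connecting morphism
  obtain ⟨s, hs⟩ : ∃ s : N ⟶ Z ⊞ M, 𝟙 N = s ≫ biprod.desc h j := Triangle.coyoneda_exact₃ _ hdist (𝟙 N) (Category.id_comp _)
  -- the comparison morphism of triangles
  let φ : binaryBiproductTriangle Z N ⟶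
      Triangle.mk (biprod.lift (v : Z ⟶ Z) u) (biprod.desc h j) (0 : N ⟶ Z⟦(1:ℤ)⟧) :=
    { hom₁ := 𝟙 Z
      hom₂ := biprod.desc (biprod.lift (v : Z ⟶ Z) u) s
      hom₃ := 𝟙 N
      comm₁ := by dsimp only [binaryBiproductTriangle, Triangle.mk]; simp
      comm₂ := by
        dsimp only [binaryBiproductTriangle, Triangle.mk]
        ext
        · simpa using (show biprod.lift (v : Z ⟶ Z) u ≫ biprod.desc h j = 0 from
            comp_distTriang_mor_zero₁₂ _ hdist).symm
        · simp [← hs]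
      comm₃ := by dsimp only [binaryBiproductTriangle, Triangle.mk]; simp }
  have hiso : IsIso φ.hom₂ :=
    isIso₂_of_isIso₁₃ φ (binaryBiproductTriangle_distinguished Z N) hdist
      (IsIso.id Z) (IsIso.id N)
  let e : (Z ⊞ N) ≅ (Z ⊞ M) := @asIso _ _ _ _ _ hiso
  have he : e.hom = biprod.desc (biprod.lift (v : Z ⟶ Z) u) s := rfl
  -- a decomposition principle through the biproduct `Z ⊞ N`
  have split : ∀ {W V : T} (f : W ⟶ Z ⊞ N) (g : Z ⊞ N ⟶ V),
      f ≫ g = f ≫ biprod.fst ≫ biprod.inl ≫ g + f ≫ biprod.snd ≫ biprod.inr ≫ g := by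
    intro W V f g
    conv_lhs => rw [show g = (biprod.fst ≫ biprod.inl + biprod.snd ≫ biprod.inr) ≫ g by
      rw [biprod.total, Category.id_comp]]
    simp only [Preadditive.add_comp, Preadditive.comp_add, Category.assoc]
  -- components of `e.inv`
  let a : Z ⟶ Z := biprod.inl ≫ e.inv ≫ biprod.fst
  let h' : Z ⟶ N := biprod.inl ≫ e.inv ≫ biprod.snd
  let c : N ⟶ Z := s ≫ biprod.fst
  have key : a ≫ (v : Z ⟶ Z) + h' ≫ c = 𝟙 Z := by
    have hL : biprod.inl ≫ e.hom ≫ biprod.fst = (v : Z ⟶ Z) := by rw [he]; simp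
    have hR : biprod.inr ≫ e.hom ≫ biprod.fst = c := by rw [he]; simp [c]
    have h0 := split (biprod.inl ≫ e.inv) (e.hom ≫ biprod.fst)
    simp only [Category.assoc] at h0
    rw [hL, hR, Iso.inv_hom_id_assoc, biprod.inl_fst] at h0
    simpa only [a, h', c, Category.assoc] using h0.symm
  -- `h' ≫ c` is a unit of `End Z`
  let aE : End Z := a
  let κ : End Z := h' ≫ c
  have hκ : IsUnit κ := by
    have h1 : IsUnit (v * (-aE) + 1) := isUnit_mem_jacobson_mul_add_one hv (-aE)
    have h2 : κ = v * (-aE) + 1 := by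
      have h3 : v * (-aE) + 1 = 1 - v * aE := by noncomm_ring
      rw [h3, End.mul_def, eq_sub_iff_add_eq]
      exact (add_comm (κ) (aE ≫ v)).trans key
    rw [h2]; exact h1
  obtain ⟨κu, hκu⟩ := hκ
  -- a right inverse of `h' ≫ c`
  let κi : Z ⟶ Z := (↑κu⁻¹ : End Z)
  have hκ1 : (h' ≫ c) ≫ κi = 𝟙 Z := by
    have h3 := κu.inv_mul
    rw [End.mul_def, hκu] at h3
    exact h3
  -- the shearing automorphism of `Z ⊞ N`
  let X' : N ⟶ Z := c ≫ κi ≫ (𝟙 Z - a)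
  let A : (Z ⊞ N) ≅ (Z ⊞ N) :=
    { hom := biprod.desc biprod.inl (biprod.lift X' (𝟙 N))
      inv := biprod.desc biprod.inl (biprod.lift (-X') (𝟙 N))
      hom_inv_id := by ext <;> simp
      inv_hom_id := by ext <;> simp }
  let e₂ : (Z ⊞ M) ≅ (Z ⊞ N) := e.symm ≪≫ A
  have hAfst : A.hom ≫ biprod.fst = biprod.desc (𝟙 Z) X' := by
    ext <;> simp [A]
  have hX : biprod.inl ≫ e.inv ≫ biprod.snd ≫ X' = 𝟙 Z - a := by
    have h4 : h' ≫ X' = 𝟙 Z - a := by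
      dsimp only [X']
      rw [show h' ≫ c ≫ κi ≫ (𝟙 Z - a) = ((h' ≫ c) ≫ κi) ≫ (𝟙 Z - a) by
        simp only [Category.assoc], hκ1, Category.id_comp]
    simpa only [h', Category.assoc] using h4
  have hcorner : biprod.inl ≫ e₂.hom ≫ biprod.fst = 𝟙 Z := by
    have hL2 : biprod.inl ≫ biprod.desc (𝟙 Z) X' = 𝟙 Z := by simp
    have hR2 : biprod.inr ≫ biprod.desc (𝟙 Z) X' = X' := by simp
    have h0 := split (biprod.inl ≫ e.inv) (biprod.desc (𝟙 Z) X')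
    simp only [Category.assoc] at h0
    rw [hL2, hR2, Category.comp_id] at h0
    have h5 : biprod.inl ≫ e₂.hom ≫ biprod.fst
        = biprod.inl ≫ e.inv ≫ biprod.desc (𝟙 Z) X' := by
      dsimp only [e₂, Iso.trans_hom, Iso.symm_hom]
      rw [Category.assoc, hAfst]
    rw [h5, h0, hX]
    show a + (𝟙 Z - a) = 𝟙 Z
    abel
  haveI : IsIso (biprod.inl ≫ e₂.hom ≫ biprod.fst) := by rw [hcorner]; infer_instance
  exact ⟨Biprod.isoElim e₂⟩
end

section
/- Let T be a triangulated category and let U and X be objects of T. Then there is a distinguished triangle X →(0,0)ᵗ U ⊕ X → U ⊕ X ⊕ X[1] → X[1] whose first morphism is zero (in particular nilpotent). Consequently, U ⪯_{Δ*} (U ⊕ X ⊕ X[1]) for every object X; in particular, no object of T is maximal with respect to ⪯_Δ. -/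
open CategoryTheory Limits Pretriangulated

universe v u

section DeltaRelation

variable (T : Type u) [Category.{v} T] [Preadditive T] [HasZeroObject T]
  [HasShift T ℤ] [∀ n : ℤ, (shiftFunctor T n).Additive] [Pretriangulated T]

/-- One step of triangle degeneration with nilpotent endomorphism. -/
def deltaStepStar (X Y : T) : Prop :=
  ∃ (Z : T) (v : End Z) (u : Z ⟶ X) (w : Z ⊞ X ⟶ Y) (d : Y ⟶ Z⟦(1:ℤ)⟧),
    IsNilpotent v ∧ Triangle.mk (biprod.lift (v : Z ⟶ Z) u) w d ∈ distTriang T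

/-- `⪯_{Δ*}` : the smallest transitive relation containing `deltaStepStar`. -/
def deltaLEStar (X Y : T) : Prop :=
  Relation.TransGen (deltaStepStar T) X Y

end DeltaRelation


lemma aux_zero_mor₁_distinguished (T : Type u) [Category.{v} T] [Preadditive T]
    [HasZeroObject T] [HasShift T ℤ] [∀ n : ℤ, (shiftFunctor T n).Additive]
    [Pretriangulated T] (A B C' : T) (e : (B ⊞ A⟦(1:ℤ)⟧ : T) ≅ C') :
    ∃ (w : B ⟶ C') (d : C' ⟶ A⟦(1:ℤ)⟧),
      Triangle.mk (0 : A ⟶ B) w d ∈ distTriang T := by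
  have hS := inv_rot_of_distTriang _
    (binaryBiproductTriangle_distinguished B (A⟦(1:ℤ)⟧))
  refine ⟨biprod.inl ≫ e.hom,
    e.inv ≫ biprod.snd ≫ (shiftEquiv T (1:ℤ)).counitIso.inv.app _ ≫
      (((shiftEquiv T (1:ℤ)).unitIso.app A).inv)⟦(1:ℤ)⟧',
    isomorphic_distinguished _ hS _ ?_⟩
  refine Triangle.isoMk _ _ ((shiftEquiv T (1:ℤ)).unitIso.app A) (Iso.refl B) e.symm
    ?_ ?_ ?_
  · have h0 : ∀ (S : Triangle T), S.mor₃ = 0 → S.invRotate.mor₁ = 0 := fun S h => by simp [h]; rfl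
    exact (by simp : (0 : A ⟶ B) ≫ 𝟙 B = 0).trans (by rw [h0 _ rfl, comp_zero]; rfl)
  · show (biprod.inl ≫ e.hom) ≫ e.inv = 𝟙 B ≫ biprod.inl
    simp
  · show (e.inv ≫ biprod.snd ≫ (shiftEquiv T (1:ℤ)).counitIso.inv.app _ ≫
      ((shiftEquiv T (1:ℤ)).unitIso.app A).inv⟦(1:ℤ)⟧') ≫ ((shiftEquiv T (1:ℤ)).unitIso.app A).hom⟦(1:ℤ)⟧' =
      e.inv ≫ biprod.snd ≫ (shiftEquiv T (1:ℤ)).counitIso.inv.app _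
    have key : ∀ {P Q R Y Z : T} (a : P ⟶ Q) (b : Q ⟶ R) (c : R ⟶ Z) (g : Y ≅ Z),
        (a ≫ b ≫ c ≫ g.inv) ≫ g.hom = a ≫ b ≫ c := by simp
    exact key _ _ _ ((shiftFunctor T (1:ℤ)).mapIso ((shiftEquiv T (1:ℤ)).unitIso.app A))

/-- Let `T` be a triangulated category and `U`, `X` objects of `T`. Then
there is a distinguished triangle `X →(0,0)ᵗ U ⊞ X → U ⊞ X ⊞ X⟦1⟧ → X⟦1⟧` whose first
morphism is zero (in particular nilpotent). Consequently `U ⪯_{Δ*} U ⊞ X ⊞ X⟦1⟧` (and in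
particular `U ⪯_Δ U ⊞ X ⊞ X⟦1⟧` for every `X`, so no object of `T` is maximal for `⪯_Δ`). -/
theorem stmt_9 (T : Type u) [Category.{v} T] [Preadditive T] [HasZeroObject T]
    [HasShift T ℤ] [∀ n : ℤ, (shiftFunctor T n).Additive] [Pretriangulated T]
    [IsTriangulated T] (U X : T) :
    (∃ (w : U ⊞ X ⟶ U ⊞ X ⊞ X⟦(1:ℤ)⟧) (d : U ⊞ X ⊞ X⟦(1:ℤ)⟧ ⟶ X⟦(1:ℤ)⟧),
      Triangle.mk (biprod.lift (0 : X ⟶ U) (0 : X ⟶ X)) w d ∈ distTriang T) ∧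
    deltaLEStar T U (U ⊞ X ⊞ X⟦(1:ℤ)⟧) ∧
    deltaLE T U (U ⊞ X ⊞ X⟦(1:ℤ)⟧) := by
  obtain ⟨w, d, hT⟩ := aux_zero_mor₁_distinguished T X (U ⊞ X)
    (U ⊞ X ⊞ X⟦(1:ℤ)⟧) (biprod.associator U X (X⟦(1:ℤ)⟧))
  obtain ⟨w₂, d₂, hT₂⟩ := aux_zero_mor₁_distinguished T X (X ⊞ U)
    (U ⊞ X ⊞ X⟦(1:ℤ)⟧)
    ((biprod.mapIso (biprod.braiding X U) (Iso.refl (X⟦(1:ℤ)⟧))) ≪≫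
      biprod.associator U X (X⟦(1:ℤ)⟧))
  have hz : biprod.lift (0 : X ⟶ U) (0 : X ⟶ X) = (0 : X ⟶ U ⊞ X) := by
    ext <;> simp
  have hz₂ : biprod.lift (0 : X ⟶ X) (0 : X ⟶ U) = (0 : X ⟶ X ⊞ U) := by
    ext <;> simp
  have hT' : Triangle.mk (biprod.lift (0 : X ⟶ U) (0 : X ⟶ X)) w d ∈ distTriang T := by
    rw [hz]; exact hT
  have hT₂' : Triangle.mk (biprod.lift (0 : X ⟶ X) (0 : X ⟶ U)) w₂ d₂ ∈ distTriang T := by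
    rw [hz₂]; exact hT₂
  refine ⟨⟨w, d, hT'⟩, ?_, ?_⟩
  · exact Relation.TransGen.single ⟨X, 0, 0, w₂, d₂, ⟨1, by simp⟩, hT₂'⟩
  · exact Relation.TransGen.single ⟨X, 0, 0, w₂, d₂, hT₂'⟩
end

section
/- Let R be a commutative Noetherian ring and let U →(α,β)ᵗ U ⊕ V →(γ,δ) W → 0 be an exact sequence of finitely generated R-modules. If for every R-module Y of finite length one has length_R(Hom_R(V,Y)) = length_R(Hom_R(W,Y)), then (α,β)ᵗ : U → U ⊕ V is a monomorphism and the resulting short exact sequence 0 → U → U ⊕ V → W → 0 remains exact after applying the functor Hom_R(−, Y) for any R-module Y of finite length. -/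
universe u

/-- The composition length of an `R`-module `M`, defined as the Krull dimension of its
lattice of submodules (for modules of finite length this is the common length of any
composition series, by the Jordan–Hölder theorem). -/
noncomputable def moduleLength (R M : Type*) [Semiring R] [AddCommMonoid M] [Module R M] :
    WithBot ℕ∞ :=
  Order.krullDim (Submodule R M)

open Order



-- K-split: splitting a chain in a modular lattice
lemma ltseries_split {α : Type*} [Lattice α] [IsModularLattice α] (a : α) (p : LTSeries α) :
    ∃ (q : LTSeries (Set.Iic a)) (r : LTSeries (Set.Ici a)),
      (q.last : α) = p.last ⊓ a ∧ (r.last : α) = p.last ⊔ a ∧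
      p.length ≤ q.length + r.length := by
  suffices h : ∀ n (p : LTSeries α), p.length = n → ∃ (q : LTSeries (Set.Iic a)) (r : LTSeries (Set.Ici a)),
      (q.last : α) = p.last ⊓ a ∧ (r.last : α) = p.last ⊔ a ∧
      p.length ≤ q.length + r.length from h p.length p rfl
  intro n
  induction n with
  | zero =>
      intro p hn
      exact ⟨RelSeries.singleton _ ⟨p.last ⊓ a, inf_le_right⟩,
        RelSeries.singleton _ ⟨p.last ⊔ a, le_sup_right⟩, rfl, rfl, by omega⟩
  | succ n ih =>
      intro p hn
      have hlen : 0 < p.length := by omega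
      have he : p.eraseLast.length = n := by rw [RelSeries.eraseLast_length]; omega
      obtain ⟨q, r, hq, hr, hle⟩ := ih p.eraseLast he
      have hstep : p.eraseLast.last < p.last := p.eraseLast_last_rel_last (by omega)
      have hinfle : p.eraseLast.last ⊓ a ≤ p.last ⊓ a := inf_le_inf_right a hstep.le
      have hsuple : p.eraseLast.last ⊔ a ≤ p.last ⊔ a := sup_le_sup_right hstep.le a
      by_cases hsup : p.eraseLast.last ⊔ a < p.last ⊔ a
      · by_cases hinf : p.eraseLast.last ⊓ a < p.last ⊓ a
        · refine ⟨q.snoc ⟨p.last ⊓ a, inf_le_right⟩ ?_, r.snoc ⟨p.last ⊔ a, le_sup_right⟩ ?_,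
            by rw [RelSeries.last_snoc], by rw [RelSeries.last_snoc], ?_⟩
          · exact (show q.last < ⟨p.last ⊓ a, inf_le_right⟩ from Subtype.coe_lt_coe.mp (hq ▸ hinf))
          · exact (show r.last < ⟨p.last ⊔ a, le_sup_right⟩ from Subtype.coe_lt_coe.mp (hr ▸ hsup))
          · simp only [RelSeries.snoc_length]; omega
        · have heq : p.eraseLast.last ⊓ a = p.last ⊓ a := hinfle.lt_or_eq.resolve_left hinf
          refine ⟨q, r.snoc ⟨p.last ⊔ a, le_sup_right⟩ (show r.last < ⟨p.last ⊔ a, le_sup_right⟩ from Subtype.coe_lt_coe.mp (hr ▸ hsup)),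
            hq.trans heq, by rw [RelSeries.last_snoc], ?_⟩
          simp only [RelSeries.snoc_length]; omega
      · have heq : p.eraseLast.last ⊔ a = p.last ⊔ a := hsuple.lt_or_eq.resolve_left hsup
        have hinf : p.eraseLast.last ⊓ a < p.last ⊓ a :=
          inf_lt_inf_of_lt_of_sup_le_sup hstep heq.ge
        refine ⟨q.snoc ⟨p.last ⊓ a, inf_le_right⟩ (show q.last < ⟨p.last ⊓ a, inf_le_right⟩ from Subtype.coe_lt_coe.mp (hq ▸ hinf)), r,
          by rw [RelSeries.last_snoc], hr.trans heq, ?_⟩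
        simp only [RelSeries.snoc_length]; omega

lemma krullDim_le_iic_add_ici {α : Type*} [Lattice α] [IsModularLattice α] (a : α) :
    krullDim α ≤ krullDim (Set.Iic a) + krullDim (Set.Ici a) := by
  refine iSup_le fun p => ?_
  obtain ⟨q, r, -, -, hle⟩ := ltseries_split a p
  calc (p.length : WithBot ℕ∞) ≤ ((q.length + r.length : ℕ) : WithBot ℕ∞) := by
        exact_mod_cast Nat.cast_le.mpr hle
    _ = (q.length : WithBot ℕ∞) + (r.length : WithBot ℕ∞) := by push_cast; ring
    _ ≤ krullDim (Set.Iic a) + krullDim (Set.Ici a) :=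
        add_le_add (Order.LTSeries.length_le_krullDim q) (Order.LTSeries.length_le_krullDim r)

lemma iic_add_ici_le_krullDim {α : Type*} [Lattice α] (a : α) :
    krullDim (Set.Iic a) + krullDim (Set.Ici a) ≤ krullDim α := by
  have : Nonempty (Set.Iic a) := ⟨⟨a, le_refl a⟩⟩
  have : Nonempty (Set.Ici a) := ⟨⟨a, le_refl a⟩⟩
  have : Nonempty α := ⟨a⟩
  rw [krullDim_eq_iSup_length (α := Set.Iic a), krullDim_eq_iSup_length (α := Set.Ici a),
    krullDim_eq_iSup_length (α := α), ← WithBot.coe_add, WithBot.coe_le_coe,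
    ENat.iSup_add]
  refine iSup_le fun q => ?_
  rw [ENat.add_iSup]
  refine iSup_le fun r => ?_
  suffices h : ∃ p : LTSeries α, q.length + r.length ≤ p.length by
    obtain ⟨p, hp⟩ := h
    exact le_trans (by exact_mod_cast Nat.cast_le.mpr hp)
      (le_iSup (fun (p : LTSeries α) => (p.length : ℕ∞)) p)
  have hqle : (q.last : α) ≤ a := q.last.2
  have hrge : a ≤ (r.head : α) := r.head.2
  set q0 : LTSeries α := q.map Subtype.val (fun _ _ h => h) with hq0def
  set r0 : LTSeries α := r.map Subtype.val (fun _ _ h => h) with hr0def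
  have hq0 : q0.last = (q.last : α) := LTSeries.last_map q Subtype.val (fun _ _ h => h)
  have hr0 : r0.head = (r.head : α) := LTSeries.head_map r Subtype.val (fun _ _ h => h)
  have hq0l : q0.length = q.length := rfl
  have hr0l : r0.length = r.length := rfl
  by_cases hqa : q0.last = a
  · by_cases hra : r0.head = a
    · exact ⟨q0.smash r0 (hqa.trans hra.symm), by rw [RelSeries.smash_length]; omega⟩
    · have hlt : q0.last < r0.head := by
        rw [hqa]; exact lt_of_le_of_ne (hr0 ▸ hrge) (fun h => hra h.symm)
      exact ⟨q0.smash (r0.cons q0.last (hqa ▸ (hqa ▸ hlt))) (by rw [RelSeries.head_cons]),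
        by rw [RelSeries.smash_length, RelSeries.cons_length]; omega⟩
  · have hlt : q0.last < a := lt_of_le_of_ne (hq0 ▸ hqle) hqa
    by_cases hra : r0.head = a
    · exact ⟨(q0.snoc a hlt).smash r0 (by rw [RelSeries.last_snoc, hra]),
        by rw [RelSeries.smash_length, RelSeries.snoc_length]; omega⟩
    · have hlt2 : a < r0.head := lt_of_le_of_ne (hr0 ▸ hrge) (fun h => hra h.symm)
      exact ⟨(q0.snoc a hlt).smash (r0.cons a hlt2)
          (by rw [RelSeries.last_snoc, RelSeries.head_cons]),
        by rw [RelSeries.smash_length, RelSeries.snoc_length, RelSeries.cons_length]; omega⟩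




section
variable {R M N : Type*} [Ring R] [AddCommGroup M] [Module R M] [AddCommGroup N] [Module R N]

lemma moduleLength_congr (e : M ≃ₗ[R] N) : moduleLength R M = moduleLength R N :=
  krullDim_eq_of_orderIso (Submodule.orderIsoMapComap e)

lemma moduleLength_iic (N : Submodule R M) : moduleLength R N = krullDim (Set.Iic N) :=
  krullDim_eq_of_orderIso (Submodule.mapIic N)

lemma moduleLength_ici (N : Submodule R M) : moduleLength R (M ⧸ N) = krullDim (Set.Ici N) :=
  krullDim_eq_of_orderIso (Submodule.comapMkQRelIso N)
end

section
variable {R M N : Type*} [Ring R] [AddCommGroup M] [Module R M] [AddCommGroup N] [Module R N]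

lemma moduleLength_additive (N : Submodule R M) :
    moduleLength R M = moduleLength R N + moduleLength R (M ⧸ N) := by
  rw [moduleLength_iic N, moduleLength_ici N]
  exact le_antisymm (krullDim_le_iic_add_ici N) (iic_add_ici_le_krullDim N)

lemma moduleLength_simple [IsSimpleModule R M] : moduleLength R M = 1 := by
  refine le_antisymm (iSup_le fun p => ?_) ?_
  · have hp : p.length ≤ 1 := by
      by_contra h
      have h2 : 2 ≤ p.length := by omega
      have h01 : p ⟨0, by omega⟩ < p ⟨1, by omega⟩ := p.strictMono (by simp [Fin.lt_def])
      have h12 : p ⟨1, by omega⟩ < p ⟨2, by omega⟩ := p.strictMono (by simp [Fin.lt_def])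
      rcases eq_bot_or_eq_top (p ⟨1, by omega⟩) with h1 | h1
      · exact absurd (h1 ▸ h01) (by simp)
      · exact absurd (h1 ▸ h12) (by simp)
    calc ((p.length : ℕ) : WithBot ℕ∞) ≤ ((1 : ℕ) : WithBot ℕ∞) := by
          exact_mod_cast Nat.cast_le.mpr hp
      _ = 1 := by norm_cast
  · have : ((RelSeries.singleton {(a, b) : Submodule R M × Submodule R M | a < b} (⊥ : Submodule R M)).snoc ⊤ (by simpa using (bot_lt_top : (⊥ : Submodule R M) < ⊤))).length = 1 := rfl
    calc (1 : WithBot ℕ∞) = ((1 : ℕ) : WithBot ℕ∞) := by norm_cast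
      _ ≤ _ := this ▸ LTSeries.length_le_krullDim _

lemma moduleLength_pos [Nontrivial M] : 1 ≤ moduleLength R M := by
  have : ((RelSeries.singleton {(a, b) : Submodule R M × Submodule R M | a < b} (⊥ : Submodule R M)).snoc ⊤ (by simpa using (bot_lt_top : (⊥ : Submodule R M) < ⊤))).length = 1 := rfl
  calc (1 : WithBot ℕ∞) = ((1 : ℕ) : WithBot ℕ∞) := by norm_cast
    _ ≤ _ := this ▸ LTSeries.length_le_krullDim _

lemma moduleLength_subsingleton [Subsingleton M] : moduleLength R M = 0 := by
  have : Unique (Submodule R M) :=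
    ⟨⟨⊥⟩, fun a => by ext x; simp [Subsingleton.elim x 0]⟩
  exact krullDim_eq_zero_of_unique

lemma moduleLength_nat (h : IsFiniteLength R M) : ∃ n : ℕ, moduleLength R M = n := by
  induction h with
  | of_subsingleton => exact ⟨0, by rw [moduleLength_subsingleton]; norm_cast⟩
  | @of_simple_quotient M _ _ N _ _ ih =>
      obtain ⟨n, hn⟩ := ih
      refine ⟨n + 1, ?_⟩
      rw [moduleLength_additive N, hn, moduleLength_simple]
      push_cast
      ring
end

section
variable {R M : Type*} [Ring R] [AddCommGroup M] [Module R M]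

lemma isFiniteLength_of_injective {N : Type*} [AddCommGroup N] [Module R N]
    (f : M →ₗ[R] N) (hf : Function.Injective f) (hN : IsFiniteLength R N) :
    IsFiniteLength R M := by
  obtain ⟨h1, h2⟩ := isFiniteLength_iff_isNoetherian_isArtinian.mp hN
  exact isFiniteLength_iff_isNoetherian_isArtinian.mpr
    ⟨isNoetherian_of_injective f hf, isArtinian_of_injective f hf⟩

lemma isFiniteLength_submodule (hM : IsFiniteLength R M) (N : Submodule R M) :
    IsFiniteLength R N := isFiniteLength_of_injective N.subtype N.injective_subtype hM

lemma isFiniteLength_quotient (hM : IsFiniteLength R M) (N : Submodule R M) :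
    IsFiniteLength R (M ⧸ N) := by
  obtain ⟨h1, h2⟩ := isFiniteLength_iff_isNoetherian_isArtinian.mp hM
  haveI := h1; haveI := h2
  exact isFiniteLength_iff_isNoetherian_isArtinian.mpr ⟨inferInstance, inferInstance⟩

lemma moduleLength_lt_of_ne_top (hM : IsFiniteLength R M) {N : Submodule R M} (hN : N ≠ ⊤) :
    moduleLength R N < moduleLength R M := by
  obtain ⟨k, hk⟩ := moduleLength_nat (isFiniteLength_submodule hM N)
  obtain ⟨l, hl⟩ := moduleLength_nat (isFiniteLength_quotient hM N)
  have : Nontrivial (M ⧸ N) :=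
    Submodule.Quotient.nontrivial_iff.mpr hN
  have h1 : (1 : WithBot ℕ∞) ≤ (l : ℕ) := hl ▸ moduleLength_pos
  have hl1 : 1 ≤ l := by exact_mod_cast h1
  rw [moduleLength_additive N, hk, hl]
  calc ((k : ℕ) : WithBot ℕ∞) < ((k + l : ℕ) : WithBot ℕ∞) := by
        exact_mod_cast (by omega : k < k + l)
    _ = ((k : ℕ) : WithBot ℕ∞) + ((l : ℕ) : WithBot ℕ∞) := by push_cast; ring
end

section
variable {R : Type*} [CommRing R]

lemma isFiniteLength_hom {M Y : Type*} [AddCommGroup M] [Module R M] [AddCommGroup Y] [Module R Y]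
    [Module.Finite R M] (hY : IsFiniteLength R Y) : IsFiniteLength R (M →ₗ[R] Y) := by
  obtain ⟨n, π, hπ⟩ := Module.Finite.exists_fin' R M
  obtain ⟨h1, h2⟩ := isFiniteLength_iff_isNoetherian_isArtinian.mp hY
  haveI := h1; haveI := h2
  have hfl : IsFiniteLength R ((Fin n → R) →ₗ[R] Y) :=
    isFiniteLength_of_injective (LinearEquiv.piRing R Y (Fin n) R).toLinearMap
      (LinearEquiv.piRing R Y (Fin n) R).injective
      (isFiniteLength_iff_isNoetherian_isArtinian.mpr ⟨inferInstance, inferInstance⟩)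
  refine isFiniteLength_of_injective (LinearMap.lcomp R Y π) (fun g₁ g₂ h => ?_) hfl
  ext m
  obtain ⟨x, rfl⟩ := hπ m
  exact DFunLike.congr_fun h x

-- length of a product
lemma moduleLength_prod {A B : Type*} [AddCommGroup A] [Module R A] [AddCommGroup B] [Module R B] :
    moduleLength R (A × B) = moduleLength R A + moduleLength R B := by
  have e1 : ((A × B) ⧸ LinearMap.ker (LinearMap.fst R A B)) ≃ₗ[R] A :=
    (LinearMap.fst R A B).quotKerEquivOfSurjective (fun a => ⟨(a, 0), rfl⟩)
  have e2 : (LinearMap.ker (LinearMap.fst R A B)) ≃ₗ[R] B := by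
    refine LinearEquiv.ofBijective
      ((LinearMap.snd R A B).comp (LinearMap.ker (LinearMap.fst R A B)).subtype) ⟨?_, ?_⟩
    · rintro ⟨⟨a, b⟩, ha⟩ ⟨⟨a', b'⟩, ha'⟩ h
      simp only [LinearMap.mem_ker, LinearMap.fst_apply] at ha ha'
      simp only [LinearMap.comp_apply, Submodule.subtype_apply, LinearMap.snd_apply] at h
      subst ha ha' h; rfl
    · intro b
      exact ⟨⟨(0, b), by simp [LinearMap.mem_ker]⟩, rfl⟩
  rw [moduleLength_additive (LinearMap.ker (LinearMap.fst R A B)),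
    moduleLength_congr e2, moduleLength_congr e1, add_comm]
end

section
variable {R : Type*} [CommRing R]

lemma isArtinian_subsingleton' {T : Type*} [AddCommGroup T] [Module R T] [Subsingleton T] :
    IsArtinian R T := inferInstance

lemma isArtinian_of_isSimpleModule {T : Type*} [AddCommGroup T] [Module R T]
    [IsSimpleModule R T] : IsArtinian R T := inferInstance

lemma isArtinian_of_fg_smul_eq_bot {T : Type*} [AddCommGroup T] [Module R T]
    {m : Ideal R} (hm : m.IsMaximal) (N : Submodule R T) (hfg : N.FG) (hb : m • N = ⊥) :
    IsArtinian R N := by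
  refine Submodule.fg_induction (motive := fun N _ => m • N = ⊥ → IsArtinian R ↥N) ?_ ?_ N hfg hb
  · intro x hx
    have hker : m ≤ LinearMap.ker (LinearMap.toSpanSingleton R T x) := by
      intro r hr
      have : r • x ∈ m • Submodule.span R {x} :=
        Submodule.smul_mem_smul hr (Submodule.mem_span_singleton_self x)
      rw [hx] at this
      simpa [LinearMap.mem_ker] using this
    have e : (R ⧸ LinearMap.ker (LinearMap.toSpanSingleton R T x)) ≃ₗ[R]
        ↥(Submodule.span R ({x} : Set T)) :=
      (LinearMap.toSpanSingleton R T x).quotKerEquivRange.trans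
        (LinearEquiv.ofEq _ _ (LinearMap.span_singleton_eq_range R T x).symm)
    suffices h : IsArtinian R (R ⧸ LinearMap.ker (LinearMap.toSpanSingleton R T x)) from
      isArtinian_of_linearEquiv e
    by_cases hI : LinearMap.ker (LinearMap.toSpanSingleton R T x) = ⊤
    · haveI : Subsingleton (R ⧸ LinearMap.ker (LinearMap.toSpanSingleton R T x)) :=
        Submodule.Quotient.subsingleton_iff.mpr hI
      exact isArtinian_subsingleton'
    · have : m = LinearMap.ker (LinearMap.toSpanSingleton R T x) := hm.eq_of_le hI hker
      haveI : IsSimpleModule R (R ⧸ LinearMap.ker (LinearMap.toSpanSingleton R T x)) := by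
        rw [← this]
        exact isSimpleModule_iff_isCoatom.mpr (Ideal.isMaximal_def.mp hm)
      exact isArtinian_of_isSimpleModule
  · intro N₁ N₂ _ _ h₁ h₂ hb
    rw [Submodule.smul_sup, sup_eq_bot_iff] at hb
    haveI := h₁ hb.1
    haveI := h₂ hb.2
    exact isArtinian_sup N₁ N₂

lemma isArtinian_quot_pow_smul [IsNoetherianRing R] {M : Type*} [AddCommGroup M] [Module R M]
    [Module.Finite R M] {m : Ideal R} (hm : m.IsMaximal) (n : ℕ) :
    IsArtinian R (M ⧸ (m ^ n • ⊤ : Submodule R M)) := by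
  induction n with
  | zero =>
      haveI : Subsingleton (M ⧸ (m ^ 0 • ⊤ : Submodule R M)) := by
        rw [pow_zero, Ideal.one_eq_top, Submodule.top_smul]
        exact Submodule.Quotient.subsingleton_iff.mpr rfl
      exact isArtinian_subsingleton'
  | succ n ih =>
      set A : Submodule R M := m ^ (n + 1) • ⊤ with hA
      set B : Submodule R M := m ^ n • ⊤ with hB
      have hAB : A ≤ B := by
        rw [hA, hB, pow_succ', mul_smul]
        exact Submodule.smul_le_right
      set S : Submodule R (M ⧸ A) := Submodule.map A.mkQ B with hS
      have hSsmul : m • S = ⊥ := by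
        rw [hS, ← Submodule.map_smul'']
        rw [← mul_smul, ← pow_succ', ← hA, eq_bot_iff, Submodule.map_le_iff_le_comap]
        rw [Submodule.comap_bot, Submodule.ker_mkQ]
      have hSart : IsArtinian R ↥S := by
        haveI : IsNoetherian R (M ⧸ A) := inferInstance
        exact isArtinian_of_fg_smul_eq_bot hm S (IsNoetherian.noetherian S) hSsmul
      have e : ((M ⧸ A) ⧸ S) ≃ₗ[R] (M ⧸ B) :=
        Submodule.quotientQuotientEquivQuotient A B hAB
      haveI : IsArtinian R ((M ⧸ A) ⧸ S) := isArtinian_of_linearEquiv e.symm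
      exact (isArtinian_iff_submodule_quotient S).mpr ⟨hSart, this⟩
end

section
variable {R : Type*} [CommRing R]

lemma exists_factor {M N Y : Type*} [AddCommGroup M] [Module R M] [AddCommGroup N] [Module R N]
    [AddCommGroup Y] [Module R Y] (c : M →ₗ[R] N) (hs : Function.Surjective c)
    (g : M →ₗ[R] Y) (hg : LinearMap.ker c ≤ LinearMap.ker g) :
    ∃ h : N →ₗ[R] Y, h.comp c = g := by
  set e := c.quotKerEquivOfSurjective hs with he
  refine ⟨(Submodule.liftQ (LinearMap.ker c) g hg).comp e.symm.toLinearMap, ?_⟩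
  ext x
  have hx : e.symm (c x) = Submodule.Quotient.mk x := by
    apply e.injective
    rw [LinearEquiv.apply_symm_apply]
    simp [he, LinearMap.quotKerEquivOfSurjective, LinearMap.quotKerEquivRange]
  simp only [LinearMap.comp_apply, LinearEquiv.coe_toLinearMap, hx]
  exact Submodule.liftQ_apply _ g x
end



/-- Let `R` be a commutative Noetherian ring and let
`U →(α,β)ᵗ U ⊕ V →(γ,δ) W → 0` be an exact sequence of finitely generated `R`-modules.
If `length_R Hom_R(V,Y) = length_R Hom_R(W,Y)` for every `R`-module `Y` of finite length,
then `(α,β)ᵗ : U → U ⊕ V` is a monomorphism and the resulting short exact sequence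
`0 → U → U ⊕ V → W → 0` remains exact after applying `Hom_R(−,Y)` for any `R`-module `Y`
of finite length. -/
theorem stmt_10 {R : Type u} [CommRing R] [IsNoetherianRing R]
    {U V W : Type u} [AddCommGroup U] [Module R U] [AddCommGroup V] [Module R V]
    [AddCommGroup W] [Module R W]
    [Module.Finite R U] [Module.Finite R V] [Module.Finite R W]
    (α : U →ₗ[R] U) (β : U →ₗ[R] V) (γ : U →ₗ[R] W) (δ : V →ₗ[R] W)
    (hexact : Function.Exact (LinearMap.prod α β) (LinearMap.coprod γ δ))
    (hsurj : Function.Surjective (LinearMap.coprod γ δ))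
    (hlen : ∀ (Y : Type u) [AddCommGroup Y] [Module R Y], IsFiniteLength R Y →
      moduleLength R (V →ₗ[R] Y) = moduleLength R (W →ₗ[R] Y)) :
    Function.Injective (LinearMap.prod α β) ∧
      ∀ (Y : Type u) [AddCommGroup Y] [Module R Y], IsFiniteLength R Y →
        (Function.Injective
            (fun g : W →ₗ[R] Y => g.comp (LinearMap.coprod γ δ)) ∧
          Function.Exact
            (fun g : W →ₗ[R] Y => g.comp (LinearMap.coprod γ δ))
            (fun g : U × V →ₗ[R] Y => g.comp (LinearMap.prod α β)) ∧
          Function.Surjective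
            (fun g : U × V →ₗ[R] Y => g.comp (LinearMap.prod α β))) := by
  set f := LinearMap.prod α β with hfdef
  set c := LinearMap.coprod γ δ with hcdef
  have hcf : ∀ u, c (f u) = 0 := fun u => (hexact (f u)).mpr ⟨u, rfl⟩
  -- surjectivity of Hom(U⊕V, Y) → Hom(U, Y) for every finite length Y
  have main : ∀ (Y : Type u) [AddCommGroup Y] [Module R Y], IsFiniteLength R Y →
      Function.Surjective (fun g : U × V →ₗ[R] Y => g.comp f) := by
    intro Y _ _ hY
    set Φ : (W →ₗ[R] Y) →ₗ[R] (U × V →ₗ[R] Y) := LinearMap.lcomp R Y c with hΦdef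
    set Ψ : (U × V →ₗ[R] Y) →ₗ[R] (U →ₗ[R] Y) := LinearMap.lcomp R Y f with hΨdef
    have hΦinj : Function.Injective Φ := by
      intro g₁ g₂ h
      ext w
      obtain ⟨z, rfl⟩ := hsurj w
      exact DFunLike.congr_fun h z
    have hker : LinearMap.ker Ψ = LinearMap.range Φ := by
      ext g
      simp only [LinearMap.mem_ker, LinearMap.mem_range]
      constructor
      · intro hg
        have hle : LinearMap.ker c ≤ LinearMap.ker g := by
          intro x hx
          obtain ⟨u, rfl⟩ := (hexact x).mp (by simpa using hx)
          have := DFunLike.congr_fun hg u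
          simpa [hΨdef] using this
        obtain ⟨h, hh⟩ := exists_factor c hsurj g hle
        exact ⟨h, LinearMap.ext fun z => by simpa [hΦdef] using DFunLike.congr_fun hh z⟩
      · rintro ⟨h, rfl⟩
        ext u
        simp [hΦdef, hΨdef, hcf u]
    -- finite lengths
    have fl1 : IsFiniteLength R (U →ₗ[R] Y) := isFiniteLength_hom hY
    have fl2 : IsFiniteLength R (V →ₗ[R] Y) := isFiniteLength_hom hY
    have flA : IsFiniteLength R (U × V →ₗ[R] Y) := isFiniteLength_hom hY
    obtain ⟨nU, hnU⟩ := moduleLength_nat fl1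
    obtain ⟨nV, hnV⟩ := moduleLength_nat fl2
    obtain ⟨nr, hnr⟩ := moduleLength_nat
      (isFiniteLength_submodule fl1 (LinearMap.range Ψ))
    -- moduleLength of the big hom module
    have eA : (U × V →ₗ[R] Y) ≃ₗ[R] ((U →ₗ[R] Y) × (V →ₗ[R] Y)) :=
      (LinearMap.coprodEquiv R).symm
    have lenA : moduleLength R (U × V →ₗ[R] Y) = ((nU + nV : ℕ) : WithBot ℕ∞) := by
      rw [moduleLength_congr eA, moduleLength_prod, hnU, hnV]
      push_cast; ring
    -- length of the kernel
    have eK : ↥(LinearMap.ker Ψ) ≃ₗ[R] (W →ₗ[R] Y) :=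
      (LinearEquiv.ofEq _ _ hker).trans (LinearEquiv.ofInjective Φ hΦinj).symm
    have lenK : moduleLength R (LinearMap.ker Ψ) = ((nV : ℕ) : WithBot ℕ∞) := by
      rw [moduleLength_congr eK, ← hlen Y hY, hnV]
    -- additivity
    have hadd := moduleLength_additive (LinearMap.ker Ψ)
      (M := (U × V →ₗ[R] Y)) (R := R)
    have eQ : ((U × V →ₗ[R] Y) ⧸ LinearMap.ker Ψ) ≃ₗ[R] ↥(LinearMap.range Ψ) :=
      Ψ.quotKerEquivRange
    rw [lenA, lenK, moduleLength_congr eQ, hnr] at hadd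
    have hadd2 : ((nU + nV : ℕ) : WithBot ℕ∞) = ((nV + nr : ℕ) : WithBot ℕ∞) := by
      rw [hadd]; push_cast; ring
    have hnat : nU + nV = nV + nr := by exact_mod_cast hadd2
    have hnrU : nr = nU := by omega
    -- range Ψ = ⊤
    have hrange : LinearMap.range Ψ = ⊤ := by
      by_contra hne
      have := moduleLength_lt_of_ne_top fl1 hne
      rw [hnr, hnU, hnrU] at this
      exact lt_irrefl _ this
    have hΨsurj : Function.Surjective Ψ := LinearMap.range_eq_top.mp hrange
    intro g
    obtain ⟨h, hh⟩ := hΨsurj g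
    exact ⟨h, hh⟩
  constructor
  · -- injectivity of f
    have hker0 : ∀ x : U, f x = 0 → x = 0 := by
      intro x hx
      by_contra hx0
      set Ann := LinearMap.ker (LinearMap.toSpanSingleton R U x) with hAnn
      have hAnnne : Ann ≠ ⊤ := by
        intro h
        have : (1 : R) ∈ Ann := h ▸ Submodule.mem_top
        simp only [hAnn, LinearMap.mem_ker, LinearMap.toSpanSingleton_apply, one_smul] at this
        exact hx0 this
      obtain ⟨m, hm, hle⟩ := Ideal.exists_le_maximal Ann hAnnne
      have hxn : ∀ n : ℕ, x ∈ (m ^ n • ⊤ : Submodule R U) := by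
        intro n
        haveI : IsArtinian R (U ⧸ (m ^ n • ⊤ : Submodule R U)) := isArtinian_quot_pow_smul hm n
        have hfl : IsFiniteLength R (U ⧸ (m ^ n • ⊤ : Submodule R U)) :=
          isFiniteLength_iff_isNoetherian_isArtinian.mpr ⟨inferInstance, inferInstance⟩
        obtain ⟨g, hg⟩ := main _ hfl (m ^ n • ⊤ : Submodule R U).mkQ
        have h0 : (m ^ n • ⊤ : Submodule R U).mkQ x = 0 := by
          rw [← hg]
          simp [hx]
        rwa [Submodule.mkQ_apply, Submodule.Quotient.mk_eq_zero] at h0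
      have hmem : x ∈ (⨅ n : ℕ, (m ^ n • ⊤ : Submodule R U)) :=
        Submodule.mem_iInf _ |>.mpr hxn
      obtain ⟨r, hr⟩ := (Ideal.mem_iInf_smul_pow_eq_bot_iff m x).mp hmem
      have h1r : (1 - (r : R)) • x = 0 := by rw [sub_smul, one_smul, hr, sub_self]
      have hAnnmem : (1 - (r : R)) ∈ Ann := by
        simpa [hAnn, LinearMap.mem_ker, LinearMap.toSpanSingleton_apply] using h1r
      have h1 : (1 : R) ∈ m := by
        have := m.add_mem (hle hAnnmem) r.2
        simpa using this
      exact hm.ne_top (Ideal.eq_top_of_unit_mem m 1 1 h1 (mul_one 1))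
    intro x y hxy
    have h0 : f (x - y) = 0 := by rw [map_sub, hxy, sub_self]
    exact sub_eq_zero.mp (hker0 _ h0)
  · intro Y _ _ hY
    refine ⟨?_, ?_, main Y hY⟩
    · intro g₁ g₂ h
      ext w
      obtain ⟨z, rfl⟩ := hsurj w
      exact DFunLike.congr_fun h z
    · intro g
      constructor
      · intro hg
        have hle : LinearMap.ker c ≤ LinearMap.ker g := by
          intro x hx
          obtain ⟨u, rfl⟩ := (hexact x).mp (by simpa using hx)
          have := DFunLike.congr_fun hg u
          simpa using this
        obtain ⟨h, hh⟩ := exists_factor c hsurj g hle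
        exact ⟨h, hh⟩
      · rintro ⟨h, rfl⟩
        ext u
        simp [hcf u]
end

section
/- Let R be a commutative Noetherian ring and let f : M → N be a homomorphism of finitely generated R-modules such that the induced map f* : Hom_R(N,Y) → Hom_R(M,Y) is surjective for every R-module Y of finite length. Then f is injective. -/
universe u

/-- A finitely generated module killed by a maximal ideal is Artinian. -/
lemma aux_artinian_of_torsion {R : Type u} [CommRing R] {m : Ideal R} (hm : m.IsMaximal)
    {V : Type u} [AddCommGroup V] [Module R V] [Module.Finite R V]
    (htor : Module.IsTorsionBySet R V (m : Set R)) : IsArtinian R V := by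
  haveI := hm
  letI := htor.module
  haveI : IsScalarTower R (R ⧸ m) V := htor.isScalarTower
  letI : Field (R ⧸ m) := Ideal.Quotient.field m
  haveI : Module.Finite (R ⧸ m) V := Module.Finite.of_restrictScalars_finite R (R ⧸ m) V
  haveI : IsArtinian (R ⧸ m) V := inferInstance
  -- transfer Artinian-ness along the (surjective) scalar restriction
  let e : Submodule R V → Submodule (R ⧸ m) V := fun N =>
    { carrier := N
      add_mem' := fun h1 h2 => N.add_mem h1 h2
      zero_mem' := N.zero_mem
      smul_mem' := by
        intro c x hx
        obtain ⟨r, rfl⟩ := Ideal.Quotient.mk_surjective c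
        have : (Ideal.Quotient.mk m r) • x = r • x := htor.mk_smul r x
        rw [this]
        exact N.smul_mem r hx }
  have hmono : StrictMono e := by
    intro a b hab
    rw [lt_iff_le_not_ge] at hab ⊢
    exact ⟨fun x hx => hab.1 hx, fun h => hab.2 fun x hx => h hx⟩
  exact hmono.wellFoundedLT

/-- Quotients by powers of a maximal ideal are Artinian. -/
lemma aux_artinian_quot_pow {R : Type u} [CommRing R] [IsNoetherianRing R] {m : Ideal R}
    (hm : m.IsMaximal) {M : Type u} [AddCommGroup M] [Module R M] [Module.Finite R M]
    (n : ℕ) : IsArtinian R (M ⧸ (m ^ n • ⊤ : Submodule R M)) := by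
  induction n with
  | zero =>
    have h : (m ^ 0 • ⊤ : Submodule R M) = ⊤ := by simp
    haveI : Subsingleton (M ⧸ (m ^ 0 • ⊤ : Submodule R M)) :=
      Submodule.Quotient.subsingleton_iff.mpr h
    infer_instance
  | succ n ih =>
    have hle : (m ^ (n + 1) • ⊤ : Submodule R M) ≤ m ^ n • ⊤ :=
      Submodule.smul_mono_left (Ideal.pow_le_pow_right (Nat.le_succ n))
    set A : Submodule R M := m ^ (n + 1) • ⊤ with hA
    set B : Submodule R M := m ^ n • ⊤ with hB
    set S : Submodule R (M ⧸ A) := B.map A.mkQ with hS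
    rw [isArtinian_iff_submodule_quotient S]
    constructor
    · -- S is a f.g. module killed by m
      haveI : IsNoetherian R M := inferInstance
      haveI : Module.Finite R S := Module.Finite.iff_fg.mpr (IsNoetherian.noetherian S)
      refine aux_artinian_of_torsion hm ?_
      rintro ⟨y, hy⟩ ⟨r, hr⟩
      obtain ⟨w, hwB, rfl⟩ := Submodule.mem_map.mp hy
      have hrw : r • w ∈ A := by
        rw [hA, pow_succ', ← smul_eq_mul, Submodule.smul_assoc]
        exact Submodule.smul_mem_smul hr hwB
      ext
      show r • (A.mkQ w) = 0
      rw [← map_smul, Submodule.mkQ_apply, Submodule.Quotient.mk_eq_zero]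
      exact hrw
    · haveI := ih
      exact isArtinian_of_linearEquiv (Submodule.quotientQuotientEquivQuotient A B hle).symm

/-- Let `R` be a commutative Noetherian ring and `f : M → N` a homomorphism
of finitely generated `R`-modules such that the induced map
`f^* : Hom_R(N,Y) → Hom_R(M,Y)` is surjective for every `R`-module `Y` of finite length.
Then `f` is injective. -/
theorem stmt_12 {R : Type u} [CommRing R] [IsNoetherianRing R]
    {M N : Type u} [AddCommGroup M] [Module R M] [AddCommGroup N] [Module R N]
    [Module.Finite R M] [Module.Finite R N]
    (f : M →ₗ[R] N)
    (hsurj : ∀ (Y : Type u) [AddCommGroup Y] [Module R Y], IsFiniteLength R Y →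
      Function.Surjective (fun g : N →ₗ[R] Y => g.comp f)) :
    Function.Injective f := by
  rw [← LinearMap.ker_eq_bot]
  rw [Submodule.eq_bot_iff]
  intro x hx
  by_contra hx0
  -- the annihilator ideal of x
  set I : Ideal R := LinearMap.ker (LinearMap.toSpanSingleton R M x) with hI
  have hI_ne_top : I ≠ ⊤ := by
    intro h
    apply hx0
    have h1 : (1 : R) ∈ I := h ▸ Submodule.mem_top
    have h2 : (1 : R) • x = 0 := h1
    simpa using h2
  obtain ⟨m, hm, hIm⟩ := Ideal.exists_le_maximal I hI_ne_top
  -- x is not in all m^n • ⊤ by Krull intersection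
  have hnot : ¬ x ∈ (⨅ i : ℕ, m ^ i • ⊤ : Submodule R M) := by
    intro hmem
    obtain ⟨r, hr⟩ := (Ideal.mem_iInf_smul_pow_eq_bot_iff m x).mp hmem
    have h1r : (1 : R) - (r : R) ∈ I := by
      show ((1 : R) - (r : R)) • x = 0
      rw [sub_smul, one_smul, hr, sub_self]
    have : (1 : R) ∈ m := by
      have := m.add_mem (hIm h1r) r.2
      simpa using this
    exact hm.ne_top (Ideal.eq_top_of_isUnit_mem m this isUnit_one)
  rw [Submodule.mem_iInf] at hnot
  push_neg at hnot
  obtain ⟨n, hn⟩ := hnot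
  -- the finite-length quotient
  set Y := M ⧸ (m ^ n • ⊤ : Submodule R M) with hY
  haveI : IsNoetherian R M := inferInstance
  haveI : IsNoetherian R Y := inferInstance
  haveI : IsArtinian R Y := aux_artinian_quot_pow hm n
  have hfl : IsFiniteLength R Y :=
    isFiniteLength_iff_isNoetherian_isArtinian.mpr ⟨inferInstance, inferInstance⟩
  obtain ⟨g, hg⟩ := hsurj Y hfl (m ^ n • ⊤ : Submodule R M).mkQ
  apply hn
  rw [← Submodule.Quotient.mk_eq_zero]
  have : (m ^ n • ⊤ : Submodule R M).mkQ x = g (f x) := by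
    rw [← hg]; rfl
  rw [Submodule.mkQ_apply] at this
  rw [this, hx, map_zero]
end
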